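/- arXiv:0710.0708 — 9 statements merged into one kernel-verified Lean document; each statement's English description precedes it below -/
import Mathlib

section
/- Let a, b, c, d be odd positive integers with a² + b² + c² = 3d² and gcd(a,b,c) = 1, and set q = a² + b². Let r, s be integers with s² + 3r² = 2q such that all of the following twelve quantities are integers: m_x = −[db(3r+s) + ac(r−s)]/(2q), n_x = −(rac + dbs)/q, m_y = [da(3r+s) − bc(r−s)]/(2q), n_y = (das − bcr)/q, m_z = (r−s)/2, n_z = r, m_u = −(rac + dbs)/q, n_u = −[db(s−3r) + ac(r+s)]/(2q), m_v = (das − rbc)/q, n_v = [da(s−3r) − bc(r+s)]/(2q), m_w = r, n_w = (r+s)/2. Then for every pair of integers (m, n), the points P = (u, v, w) and Q = (x, y, z) given by u = m_u·m − n_u·n, v = m_v·m − n_v·n, w = m_w·m − n_w·n, x = m_x·m − n_x·n, y = m_y·m − n_y·n, z = m_z·m − n_z·n satisfy: a·u + b·v + c·w = 0, a·x + b·y + c·z = 0, and the three squared Euclidean distances |OP|², |OQ|², |PQ|² (with O = (0,0,0)) are all equal to 2d²(m² − mn + n²); in particular, if (m,n) ≠ (0,0) then O, P, Q form an equilateral triangle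 with integer coordinates lying in the plane {(α,β,γ) : aα + bβ + cγ = 0} with side length d·√(2(m² − mn + n²)). -/
/-!
Write `m_Q = (m_x, m_y, m_z)` and `m_P = (m_u, m_v, m_w)`. The integrality equations force
`(n_x, n_y, n_z) = m_P` and `(n_u, n_v, n_w) = m_P - m_Q`, so `Q = m m_Q - n m_P` and
`P = n m_Q - (n - m) m_P`. The vectors `f = (-b, a, 0)` and `g = (ac, bc, -q)` form an orthogonal
frame of the plane with `|f|² = q` and `|g|² = 3d²q`, and the coefficients are chosen so that
`2q m_Q = d(3r + s) f + (s - r) g` and `2q m_P = 2ds f - 2r g`. With `s² + 3r² = 2q` this gives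
`|m_Q|² = |m_P|² = 2d²` and `m_Q · m_P = d²`: the two vectors span a hexagonal lattice, in which
`|k m_Q - l m_P|² = 2d²(k² - kl + l²)`.
-/

open Matrix

section DotProduct

variable {R ι : Type*} [CommRing R] [Fintype ι]

theorem smul_dotProduct_smul (k l : R) (x y : ι → R) : (k • x) ⬝ᵥ (l • y) = k * l * (x ⬝ᵥ y) := by
  simp only [smul_dotProduct, dotProduct_smul, smul_eq_mul]
  ring

theorem sq_mul_dotProduct_of_smul_eq_of_orthogonal {f g x u : ι → R} {k α β γ δ : R}
    (hfg : f ⬝ᵥ g = 0) (hx : k • x = α • f + β • g) (hu : k • u = γ • f + δ • g) :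
    k ^ 2 * (x ⬝ᵥ u) = α * γ * (f ⬝ᵥ f) + β * δ * (g ⬝ᵥ g) := by
  rw [sq, ← smul_dotProduct_smul, hx, hu]
  simp only [add_dotProduct, dotProduct_add, smul_dotProduct_smul, dotProduct_comm g f, hfg]
  ring

theorem dotProduct_eq_zero_of_smul_eq [NoZeroDivisors R] {f g x w : ι → R} {k α β : R} (hk : k ≠ 0)
    (hf : w ⬝ᵥ f = 0) (hg : w ⬝ᵥ g = 0) (hx : k • x = α • f + β • g) : w ⬝ᵥ x = 0 := by
  refine (mul_eq_zero.mp ?_).resolve_left hk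
  rw [← smul_eq_mul, ← dotProduct_smul, hx, dotProduct_add, dotProduct_smul, dotProduct_smul, hf, hg]
  simp

theorem dotProduct_self_smul_sub_smul {x u : ι → R} {k : R} (hx : x ⬝ᵥ x = 2 * k)
    (hu : u ⬝ᵥ u = 2 * k) (hxu : x ⬝ᵥ u = k) (m n : R) :
    (m • x - n • u) ⬝ᵥ (m • x - n • u) = 2 * k * (m ^ 2 - m * n + n ^ 2) := by
  simp only [sub_dotProduct, dotProduct_sub, smul_dotProduct_smul, dotProduct_comm u x, hx, hu, hxu]
  ring

end DotProduct

theorem sq_sub_mul_add_sq_pos {R : Type*} [CommRing R] [LinearOrder R] [IsStrictOrderedRing R]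
    {m n : R} (h : (m, n) ≠ (0, 0)) : 0 < m ^ 2 - m * n + n ^ 2 := by
  rcases eq_or_ne n 0 with rfl | hn
  · have hm : m ≠ 0 := fun hm => h (by rw [hm])
    simpa using sq_pos_of_ne_zero hm
  · nlinarith [sq_nonneg (2 * m - n), sq_pos_of_ne_zero hn]

theorem Prod.mk_ne_mk_of_sum_sq_sub_ne_zero {R : Type*} [Ring R] {x y z x' y' z' : R}
    (h : (x - x') ^ 2 + (y - y') ^ 2 + (z - z') ^ 2 ≠ 0) : (x, y, z) ≠ (x', y', z') := by
  intro hxyz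
  simp only [Prod.mk.injEq] at hxyz
  obtain ⟨rfl, rfl, rfl⟩ := hxyz
  simp at h

section Paramtwo

variable {a b c d q r s : ℤ}

theorem paramtwo_frame_orthogonal : ![-b, a, 0] ⬝ᵥ ![a * c, b * c, -q] = 0 := by
  rw [vec3_dotProduct']
  ring

theorem paramtwo_frame_sq (hq : q = a ^ 2 + b ^ 2) (heq : a ^ 2 + b ^ 2 + c ^ 2 = 3 * d ^ 2) :
    ![-b, a, 0] ⬝ᵥ ![-b, a, 0] = q ∧ ![a * c, b * c, -q] ⬝ᵥ ![a * c, b * c, -q] = 3 * d ^ 2 * q := by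
  simp only [vec3_dotProduct']
  constructor
  · linear_combination -hq
  · linear_combination (q - c ^ 2) * hq + q * heq

theorem paramtwo_frame_mem_plane (hq : q = a ^ 2 + b ^ 2) :
    ![a, b, c] ⬝ᵥ ![-b, a, 0] = 0 ∧ ![a, b, c] ⬝ᵥ ![a * c, b * c, -q] = 0 := by
  simp only [vec3_dotProduct']
  constructor
  · ring
  · linear_combination -c * hq

theorem paramtwo_smul_mQ {mx my mz : ℤ}
    (hmx : mx * (2 * q) = -(d * b * (3 * r + s) + a * c * (r - s)))
    (hmy : my * (2 * q) = d * a * (3 * r + s) - b * c * (r - s))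
    (hmz : mz * 2 = r - s) :
    (2 * q) • ![mx, my, mz] = (d * (3 * r + s)) • ![-b, a, 0] + (s - r) • ![a * c, b * c, -q] := by
  simp only [smul_vec3, vec3_add, smul_eq_mul, vecCons_inj, and_true]
  exact ⟨by linear_combination hmx, by linear_combination hmy, by linear_combination q * hmz⟩

theorem paramtwo_smul_mP {mu mv mw : ℤ}
    (hmu : mu * q = -(r * a * c + d * b * s))
    (hmv : mv * q = d * a * s - r * b * c)
    (hmw : mw = r) :
    (2 * q) • ![mu, mv, mw] = (2 * d * s) • ![-b, a, 0] + (-2 * r) • ![a * c, b * c, -q] := by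
  simp only [smul_vec3, vec3_add, smul_eq_mul, vecCons_inj, and_true]
  exact ⟨by linear_combination 2 * hmu, by linear_combination 2 * hmv,
    by linear_combination 2 * q * hmw⟩

theorem paramtwo_gram {x u : Fin 3 → ℤ} (hq : q = a ^ 2 + b ^ 2) (hq0 : q ≠ 0)
    (heq : a ^ 2 + b ^ 2 + c ^ 2 = 3 * d ^ 2) (hrs : s ^ 2 + 3 * r ^ 2 = 2 * q)
    (hx : (2 * q) • x = (d * (3 * r + s)) • ![-b, a, 0] + (s - r) • ![a * c, b * c, -q])
    (hu : (2 * q) • u = (2 * d * s) • ![-b, a, 0] + (-2 * r) • ![a * c, b * c, -q]) :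
    x ⬝ᵥ x = 2 * d ^ 2 ∧ u ⬝ᵥ u = 2 * d ^ 2 ∧ x ⬝ᵥ u = d ^ 2 := by
  obtain ⟨hf, hg⟩ := paramtwo_frame_sq hq heq
  have hk : (2 * q) ^ 2 ≠ 0 := by positivity
  refine ⟨mul_left_cancel₀ hk ?_, mul_left_cancel₀ hk ?_, mul_left_cancel₀ hk ?_⟩
  · rw [sq_mul_dotProduct_of_smul_eq_of_orthogonal paramtwo_frame_orthogonal hx hx, hf, hg]
    linear_combination 4 * q * d ^ 2 * hrs
  · rw [sq_mul_dotProduct_of_smul_eq_of_orthogonal paramtwo_frame_orthogonal hu hu, hf, hg]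
    linear_combination 4 * q * d ^ 2 * hrs
  · rw [sq_mul_dotProduct_of_smul_eq_of_orthogonal paramtwo_frame_orthogonal hx hu, hf, hg]
    linear_combination 2 * q * d ^ 2 * hrs

theorem paramtwo_mem_plane {x u : Fin 3 → ℤ} (hq : q = a ^ 2 + b ^ 2) (hq0 : q ≠ 0)
    (hx : (2 * q) • x = (d * (3 * r + s)) • ![-b, a, 0] + (s - r) • ![a * c, b * c, -q])
    (hu : (2 * q) • u = (2 * d * s) • ![-b, a, 0] + (-2 * r) • ![a * c, b * c, -q]) :
    ![a, b, c] ⬝ᵥ x = 0 ∧ ![a, b, c] ⬝ᵥ u = 0 := by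
  obtain ⟨hf, hg⟩ := paramtwo_frame_mem_plane (c := c) hq
  have h2q : 2 * q ≠ 0 := mul_ne_zero two_ne_zero hq0
  exact ⟨dotProduct_eq_zero_of_smul_eq h2q hf hg hx, dotProduct_eq_zero_of_smul_eq h2q hf hg hu⟩

theorem paramtwo_nQ_eq_mP {mu mv mw nx ny nz : ℤ} (hq0 : q ≠ 0)
    (hmu : mu * q = -(r * a * c + d * b * s)) (hmv : mv * q = d * a * s - r * b * c) (hmw : mw = r)
    (hnx : nx * q = -(r * a * c + d * b * s)) (hny : ny * q = d * a * s - b * c * r) (hnz : nz = r) :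
    nx = mu ∧ ny = mv ∧ nz = mw :=
  ⟨mul_right_cancel₀ hq0 (by linear_combination hnx - hmu),
    mul_right_cancel₀ hq0 (by linear_combination hny - hmv), hnz.trans hmw.symm⟩

theorem paramtwo_nP_eq_mP_sub_mQ {mx my mz mu mv mw nu nv nw : ℤ} (hq0 : q ≠ 0)
    (hmx : mx * (2 * q) = -(d * b * (3 * r + s) + a * c * (r - s)))
    (hmy : my * (2 * q) = d * a * (3 * r + s) - b * c * (r - s))
    (hmz : mz * 2 = r - s)
    (hmu : mu * q = -(r * a * c + d * b * s)) (hmv : mv * q = d * a * s - r * b * c) (hmw : mw = r)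
    (hnu : nu * (2 * q) = -(d * b * (s - 3 * r) + a * c * (r + s)))
    (hnv : nv * (2 * q) = d * a * (s - 3 * r) - b * c * (r + s))
    (hnw : nw * 2 = r + s) :
    nu = mu - mx ∧ nv = mv - my ∧ nw = mw - mz := by
  have h2q : 2 * q ≠ 0 := by positivity
  exact ⟨mul_right_cancel₀ h2q (by linear_combination hnu - 2 * hmu + hmx),
    mul_right_cancel₀ h2q (by linear_combination hnv - 2 * hmv + hmy),
    mul_right_cancel₀ two_ne_zero (by linear_combination hnw - 2 * hmw + hmz)⟩

end Paramtwo

theorem paramtwo_gives_equilateral_general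
    (a b c d : ℤ)
    (ha : 0 < a) (hd : 0 < d)
    (heq : a ^ 2 + b ^ 2 + c ^ 2 = 3 * d ^ 2)
    (q : ℤ) (hq : q = a ^ 2 + b ^ 2)
    (r s : ℤ) (hrs : s ^ 2 + 3 * r ^ 2 = 2 * q)
    (mx nx my ny mz nz mu nu mv nv mw nw : ℤ)
    (hmx : mx * (2 * q) = -(d * b * (3 * r + s) + a * c * (r - s)))
    (hnx : nx * q = -(r * a * c + d * b * s))
    (hmy : my * (2 * q) = d * a * (3 * r + s) - b * c * (r - s))
    (hny : ny * q = d * a * s - b * c * r)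
    (hmz : mz * 2 = r - s)
    (hnz : nz = r)
    (hmu : mu * q = -(r * a * c + d * b * s))
    (hnu : nu * (2 * q) = -(d * b * (s - 3 * r) + a * c * (r + s)))
    (hmv : mv * q = d * a * s - r * b * c)
    (hnv : nv * (2 * q) = d * a * (s - 3 * r) - b * c * (r + s))
    (hmw : mw = r)
    (hnw : nw * 2 = r + s) :
    ∀ m n : ℤ,
      a * (mu * m - nu * n) + b * (mv * m - nv * n) + c * (mw * m - nw * n) = 0 ∧
      a * (mx * m - nx * n) + b * (my * m - ny * n) + c * (mz * m - nz * n) = 0 ∧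
      (mu * m - nu * n) ^ 2 + (mv * m - nv * n) ^ 2 + (mw * m - nw * n) ^ 2 =
        2 * d ^ 2 * (m ^ 2 - m * n + n ^ 2) ∧
      (mx * m - nx * n) ^ 2 + (my * m - ny * n) ^ 2 + (mz * m - nz * n) ^ 2 =
        2 * d ^ 2 * (m ^ 2 - m * n + n ^ 2) ∧
      ((mu * m - nu * n) - (mx * m - nx * n)) ^ 2 +
        ((mv * m - nv * n) - (my * m - ny * n)) ^ 2 +
        ((mw * m - nw * n) - (mz * m - nz * n)) ^ 2 =
        2 * d ^ 2 * (m ^ 2 - m * n + n ^ 2) ∧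
      ((m, n) ≠ (0, 0) →
        ((mu * m - nu * n, mv * m - nv * n, mw * m - nw * n) : ℤ × ℤ × ℤ) ≠ (0, 0, 0) ∧
        ((mx * m - nx * n, my * m - ny * n, mz * m - nz * n) : ℤ × ℤ × ℤ) ≠ (0, 0, 0) ∧
        ((mu * m - nu * n, mv * m - nv * n, mw * m - nw * n) : ℤ × ℤ × ℤ) ≠
          (mx * m - nx * n, my * m - ny * n, mz * m - nz * n)) := by
  intro m n
  have hq0 : q ≠ 0 := by rw [hq]; positivity
  have hQ := paramtwo_smul_mQ hmx hmy hmz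
  have hP := paramtwo_smul_mP hmu hmv hmw
  obtain ⟨hQQ, hPP, hQP⟩ := paramtwo_gram hq hq0 heq hrs hQ hP
  obtain ⟨planeQ, planeP⟩ := paramtwo_mem_plane hq hq0 hQ hP
  have normP := dotProduct_self_smul_sub_smul hQQ hPP hQP n (n - m)
  have normQ := dotProduct_self_smul_sub_smul hQQ hPP hQP m n
  have normPQ := dotProduct_self_smul_sub_smul hQQ hPP hQP (n - m) (-m)
  simp only [vec3_dotProduct', smul_cons, smul_eq_mul, smul_empty, sub_cons, head_cons, tail_cons,
    sub_self, zero_empty] at planeQ planeP normP normQ normPQ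
  obtain ⟨rfl, rfl, rfl⟩ := paramtwo_nP_eq_mP_sub_mQ hq0 hmx hmy hmz hmu hmv hmw hnu hnv hnw
  obtain ⟨rfl, rfl, rfl⟩ := paramtwo_nQ_eq_mP hq0 hmu hmv hmw hnx hny hnz
  have hpos : (m, n) ≠ (0, 0) → 2 * d ^ 2 * (m ^ 2 - m * n + n ^ 2) ≠ 0 := fun h =>
    (mul_pos (by positivity) (sq_sub_mul_add_sq_pos h)).ne'
  refine ⟨by linear_combination (m - n) * planeP + n * planeQ,
    by linear_combination m * planeQ - n * planeP,
    by linear_combination normP, by linear_combination normQ, by linear_combination normPQ,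
    fun h => ⟨?_, ?_, ?_⟩⟩ <;> apply Prod.mk_ne_mk_of_sum_sq_sub_ne_zero <;> convert hpos h using 1
  · linear_combination normP
  · linear_combination normQ
  · linear_combination normPQ

/-- The parametrization (paramtwo) produces, for every pair of
integers `(m, n)`, two points `P = (u, v, w)` and `Q = (x, y, z)` in the plane
`aα + bβ + cγ = 0` which, together with the origin, form an equilateral triangle
with all three squared side lengths equal to `2d²(m² − mn + n²)`. The twelve
coefficient quantities are assumed to be integers (expressed by the
denominator-clearing equations below). -/
theorem paramtwo_gives_equilateral
    (a b c d : ℤ)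
    (ha : 0 < a) (hb : 0 < b) (hc : 0 < c) (hd : 0 < d)
    (hao : Odd a) (hbo : Odd b) (hco : Odd c) (hdo : Odd d)
    (heq : a ^ 2 + b ^ 2 + c ^ 2 = 3 * d ^ 2)
    (hgcd : Int.gcd a (Int.gcd b c) = 1)
    (q : ℤ) (hq : q = a ^ 2 + b ^ 2)
    (r s : ℤ) (hrs : s ^ 2 + 3 * r ^ 2 = 2 * q)
    (mx nx my ny mz nz mu nu mv nv mw nw : ℤ)
    (hmx : mx * (2 * q) = -(d * b * (3 * r + s) + a * c * (r - s)))
    (hnx : nx * q = -(r * a * c + d * b * s))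
    (hmy : my * (2 * q) = d * a * (3 * r + s) - b * c * (r - s))
    (hny : ny * q = d * a * s - b * c * r)
    (hmz : mz * 2 = r - s)
    (hnz : nz = r)
    (hmu : mu * q = -(r * a * c + d * b * s))
    (hnu : nu * (2 * q) = -(d * b * (s - 3 * r) + a * c * (r + s)))
    (hmv : mv * q = d * a * s - r * b * c)
    (hnv : nv * (2 * q) = d * a * (s - 3 * r) - b * c * (r + s))
    (hmw : mw = r)
    (hnw : nw * 2 = r + s) :
    ∀ m n : ℤ,
      a * (mu * m - nu * n) + b * (mv * m - nv * n) + c * (mw * m - nw * n) = 0 ∧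
      a * (mx * m - nx * n) + b * (my * m - ny * n) + c * (mz * m - nz * n) = 0 ∧
      (mu * m - nu * n) ^ 2 + (mv * m - nv * n) ^ 2 + (mw * m - nw * n) ^ 2 =
        2 * d ^ 2 * (m ^ 2 - m * n + n ^ 2) ∧
      (mx * m - nx * n) ^ 2 + (my * m - ny * n) ^ 2 + (mz * m - nz * n) ^ 2 =
        2 * d ^ 2 * (m ^ 2 - m * n + n ^ 2) ∧
      ((mu * m - nu * n) - (mx * m - nx * n)) ^ 2 +
        ((mv * m - nv * n) - (my * m - ny * n)) ^ 2 +
        ((mw * m - nw * n) - (mz * m - nz * n)) ^ 2 =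
        2 * d ^ 2 * (m ^ 2 - m * n + n ^ 2) ∧
      ((m, n) ≠ (0, 0) →
        ((mu * m - nu * n, mv * m - nv * n, mw * m - nw * n) : ℤ × ℤ × ℤ) ≠ (0, 0, 0) ∧
        ((mx * m - nx * n, my * m - ny * n, mz * m - nz * n) : ℤ × ℤ × ℤ) ≠ (0, 0, 0) ∧
        ((mu * m - nu * n, mv * m - nv * n, mw * m - nw * n) : ℤ × ℤ × ℤ) ≠
          (mx * m - nx * n, my * m - ny * n, mz * m - nz * n)) :=
  paramtwo_gives_equilateral_general a b c d ha hd heq q hq r s hrs mx nx my ny mz nz mu nu mv nv mw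
    nw hmx hnx hmy hny hmz hnz hmu hnu hmv hnv hmw hnw
end

section
/- Let a, b, c, d, r, s be rational numbers with a² + b² + c² = 3d², q = a² + b² ≠ 0, and s² + 3r² = 2q. Define the rational numbers m_x = −[db(3r+s) + ac(r−s)]/(2q), n_x = −(rac + dbs)/q, m_y = [da(3r+s) − bc(r−s)]/(2q), n_y = (das − bcr)/q, m_z = (r−s)/2, n_z = r, m_u = −(rac + dbs)/q, n_u = −[db(s−3r) + ac(r+s)]/(2q), m_v = (das − rbc)/q, n_v = [da(s−3r) − bc(r+s)]/(2q), m_w = r, n_w = (r+s)/2. Then m_v·n_w − m_w·n_v = a·d, m_w·n_u − m_u·n_w = b·d, and m_u·n_v − m_v·n_u = c·d. -/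
/-!
Clearing the denominators, each of the three minors is `x * d * (s ^ 2 + 3 * r ^ 2)` divided by
`2 * (a ^ 2 + b ^ 2)`, for `x = a, b, c` respectively: in the third one the terms in `a * b * c ^ 2`
and `a * b * d ^ 2` cancel, and the rest factors as `(a ^ 2 + b ^ 2) * c * d * (s ^ 2 + 3 * r ^ 2)`.
The relation `s ^ 2 + 3 * r ^ 2 = 2 * (a ^ 2 + b ^ 2)` makes the common factor `1`.
-/

namespace Paramtwo

variable {K : Type*} [Field K] [NeZero (2 : K)]

def mu (a b c d r s : K) : K := -((r * a * c + d * b * s) / (a ^ 2 + b ^ 2))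

def nu (a b c d r s : K) : K := -((d * b * (s - 3 * r) + a * c * (r + s)) / (2 * (a ^ 2 + b ^ 2)))

def mv (a b c d r s : K) : K := (d * a * s - r * b * c) / (a ^ 2 + b ^ 2)

def nv (a b c d r s : K) : K := (d * a * (s - 3 * r) - b * c * (r + s)) / (2 * (a ^ 2 + b ^ 2))

def scale (a b r s : K) : K := (s ^ 2 + 3 * r ^ 2) / (2 * (a ^ 2 + b ^ 2))

variable {a b : K} (c d r s : K)

theorem scale_eq_one (hq : a ^ 2 + b ^ 2 ≠ 0) (hrs : s ^ 2 + 3 * r ^ 2 = 2 * (a ^ 2 + b ^ 2)) :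
    scale a b r s = 1 := by
  rw [scale, hrs, div_self (mul_ne_zero two_ne_zero hq)]

theorem mv_mul_sub_mul_nv (hq : a ^ 2 + b ^ 2 ≠ 0) :
    mv a b c d r s * ((r + s) / 2) - r * nv a b c d r s = a * d * scale a b r s := by
  unfold mv nv scale
  field_simp
  ring

theorem mul_nu_sub_mu_mul (hq : a ^ 2 + b ^ 2 ≠ 0) :
    r * nu a b c d r s - mu a b c d r s * ((r + s) / 2) = b * d * scale a b r s := by
  unfold mu nu scale
  field_simp
  ring

theorem mu_mul_nv_sub_mv_mul_nu (hq : a ^ 2 + b ^ 2 ≠ 0) :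
    mu a b c d r s * nv a b c d r s - mv a b c d r s * nu a b c d r s
      = c * d * scale a b r s := by
  unfold mu nu mv nv scale
  field_simp
  ring

end Paramtwo

open Paramtwo in
theorem paramtwo_minors_general
    (a b c d r s : ℚ)
    (hq : a ^ 2 + b ^ 2 ≠ 0)
    (hrs : s ^ 2 + 3 * r ^ 2 = 2 * (a ^ 2 + b ^ 2)) :
    (((d * a * s - r * b * c) / (a ^ 2 + b ^ 2)) * ((r + s) / 2) -
        r * ((d * a * (s - 3 * r) - b * c * (r + s)) / (2 * (a ^ 2 + b ^ 2))) = a * d) ∧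
    (r * (-((d * b * (s - 3 * r) + a * c * (r + s)) / (2 * (a ^ 2 + b ^ 2)))) -
        (-((r * a * c + d * b * s) / (a ^ 2 + b ^ 2))) * ((r + s) / 2) = b * d) ∧
    ((-((r * a * c + d * b * s) / (a ^ 2 + b ^ 2))) *
        ((d * a * (s - 3 * r) - b * c * (r + s)) / (2 * (a ^ 2 + b ^ 2))) -
        ((d * a * s - r * b * c) / (a ^ 2 + b ^ 2)) *
        (-((d * b * (s - 3 * r) + a * c * (r + s)) / (2 * (a ^ 2 + b ^ 2)))) = c * d) := by
  have hscale : scale a b r s = 1 := scale_eq_one r s hq hrs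
  refine ⟨(mv_mul_sub_mul_nv c d r s hq).trans ?_, (mul_nu_sub_mu_mul c d r s hq).trans ?_,
    (mu_mul_nv_sub_mv_mul_nu c d r s hq).trans ?_⟩ <;>
  rw [hscale, mul_one]

/-- Algebraic identities over ℚ among the coefficients of the
parametrization (paramtwo): the three 2×2 minors equal `ad`, `bd`, `cd`. -/
theorem paramtwo_minors
    (a b c d r s : ℚ)
    (heq : a ^ 2 + b ^ 2 + c ^ 2 = 3 * d ^ 2)
    (hq : a ^ 2 + b ^ 2 ≠ 0)
    (hrs : s ^ 2 + 3 * r ^ 2 = 2 * (a ^ 2 + b ^ 2)) :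
    (((d * a * s - r * b * c) / (a ^ 2 + b ^ 2)) * ((r + s) / 2) -
        r * ((d * a * (s - 3 * r) - b * c * (r + s)) / (2 * (a ^ 2 + b ^ 2))) = a * d) ∧
    (r * (-((d * b * (s - 3 * r) + a * c * (r + s)) / (2 * (a ^ 2 + b ^ 2)))) -
        (-((r * a * c + d * b * s) / (a ^ 2 + b ^ 2))) * ((r + s) / 2) = b * d) ∧
    ((-((r * a * c + d * b * s) / (a ^ 2 + b ^ 2))) *
        ((d * a * (s - 3 * r) - b * c * (r + s)) / (2 * (a ^ 2 + b ^ 2))) -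
        ((d * a * s - r * b * c) / (a ^ 2 + b ^ 2)) *
        (-((d * b * (s - 3 * r) + a * c * (r + s)) / (2 * (a ^ 2 + b ^ 2)))) = c * d) :=
  paramtwo_minors_general a b c d r s hq hrs
end

section
/- Let a, b, c, d, r, s be rational numbers with a² + b² + c² = 3d², d ≠ 0, q = a² + b² ≠ 0, and s² + 3r² = 2q, and define m_u = −(rac + dbs)/q, n_u = −[db(s−3r) + ac(r+s)]/(2q), m_v = (das − rbc)/q, n_v = [da(s−3r) − bc(r+s)]/(2q), m_w = r, n_w = (r+s)/2. Then for every (u₀, v₀, w₀) ∈ ℚ³ with a·u₀ + b·v₀ + c·w₀ = 0, there exists a unique pair of rational numbers (m, n) such that u₀ = m_u·m − n_u·n, v₀ = m_v·m − n_v·n, and w₀ = m_w·m − n_w·n. -/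
/-!
The parametrization is a linear map `ℚ² → ℚ³` whose image lies in the plane
`a·u + b·v + c·w = 0`. On that plane a point is determined by `b·u - a·v` and `w`,
because `(a, b) ≠ 0`. For the parametrized point these two quantities are
`d·(-s·m + (s - 3r)/2·n)` and `r·m - (r + s)/2·n`, a `2 × 2` system of determinant
`(s² + 3r²)/2 = a² + b²`, hence uniquely solvable.
-/

theorem existsUnique_of_det_ne_zero {K : Type*} [Field K] {α β γ δ : K}
    (hdet : α * δ - β * γ ≠ 0) (x y : K) :
    ∃! p : K × K, α * p.1 + β * p.2 = x ∧ γ * p.1 + δ * p.2 = y := by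
  refine ⟨((δ * x - β * y) / (α * δ - β * γ), (α * y - γ * x) / (α * δ - β * γ)), ?_, ?_⟩
  · exact ⟨by linear_combination x * mul_inv_cancel₀ hdet,
      by linear_combination y * mul_inv_cancel₀ hdet⟩
  · rintro ⟨m, n⟩ ⟨hx, hy⟩
    ext
    · rw [eq_div_iff hdet]
      linear_combination δ * hx - β * hy
    · rw [eq_div_iff hdet]
      linear_combination α * hy - γ * hx

theorem injOn_plane_of_sq_add_sq_ne_zero {K : Type*} [Field K] {a b : K} (c : K)
    (hq : a ^ 2 + b ^ 2 ≠ 0) :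
    Set.InjOn (fun x : K × K × K => (b * x.1 - a * x.2.1, x.2.2))
      {x | a * x.1 + b * x.2.1 + c * x.2.2 = 0} := by
  rintro ⟨u, v, w⟩ hx ⟨u', v', w'⟩ hx' hxx'
  simp only [Set.mem_ofPred_eq, Prod.mk.injEq] at hx hx' hxx'
  obtain ⟨hcross, rfl⟩ := hxx'
  have hu : (a ^ 2 + b ^ 2) * (u - u') = 0 := by
    linear_combination a * hx - a * hx' + b * hcross
  have hv : (a ^ 2 + b ^ 2) * (v - v') = 0 := by
    linear_combination b * hx - b * hx' - a * hcross
  simp only [Prod.mk.injEq, and_true]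
  exact ⟨sub_eq_zero.mp ((mul_eq_zero.mp hu).resolve_left hq),
    sub_eq_zero.mp ((mul_eq_zero.mp hv).resolve_left hq)⟩

section paramtwo

variable {K : Type*} [Field K] (a b c d r s : K)

/-- `(m_u·m - n_u·n, m_v·m - n_v·n, m_w·m - n_w·n)` for `p = (m, n)`. -/
def paramtwo (p : K × K) : K × K × K :=
  ((-((r * a * c + d * b * s) / (a ^ 2 + b ^ 2))) * p.1 -
      (-((d * b * (s - 3 * r) + a * c * (r + s)) / (2 * (a ^ 2 + b ^ 2)))) * p.2,
    ((d * a * s - r * b * c) / (a ^ 2 + b ^ 2)) * p.1 -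
      ((d * a * (s - 3 * r) - b * c * (r + s)) / (2 * (a ^ 2 + b ^ 2))) * p.2,
    r * p.1 - ((r + s) / 2) * p.2)

variable {a b c d r s}

theorem paramtwo_mem_plane_s3 [NeZero (2 : K)] (hq : a ^ 2 + b ^ 2 ≠ 0) (p : K × K) :
    a * (paramtwo a b c d r s p).1 + b * (paramtwo a b c d r s p).2.1 +
      c * (paramtwo a b c d r s p).2.2 = 0 := by
  simp only [paramtwo]
  field_simp
  ring

theorem paramtwo_cross [NeZero (2 : K)] (hq : a ^ 2 + b ^ 2 ≠ 0) (p : K × K) :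
    b * (paramtwo a b c d r s p).1 - a * (paramtwo a b c d r s p).2.1 =
      d * (-s * p.1 + (s - 3 * r) / 2 * p.2) := by
  simp only [paramtwo]
  field_simp
  ring

theorem existsUnique_paramtwo_eq [NeZero (2 : K)] (hd : d ≠ 0) (hq : a ^ 2 + b ^ 2 ≠ 0)
    (hrs : s ^ 2 + 3 * r ^ 2 = 2 * (a ^ 2 + b ^ 2)) {x : K × K × K}
    (hx : a * x.1 + b * x.2.1 + c * x.2.2 = 0) :
    ∃! p : K × K, x = paramtwo a b c d r s p := by
  have hdet : -s * -((r + s) / 2) - (s - 3 * r) / 2 * r = a ^ 2 + b ^ 2 := by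
    field_simp
    linear_combination hrs
  refine (existsUnique_congr fun p => ?_).mp
    (existsUnique_of_det_ne_zero (hdet ▸ hq) ((b * x.1 - a * x.2.1) / d) x.2.2)
  rw [@eq_comm _ x, ← (injOn_plane_of_sq_add_sq_ne_zero c hq).eq_iff (paramtwo_mem_plane_s3 hq p) hx,
    Prod.mk.injEq, paramtwo_cross hq, eq_div_iff hd, mul_comm]
  exact and_congr Iff.rfl (by rw [neg_mul, ← sub_eq_add_neg]; rfl)

end paramtwo

theorem paramtwo_unique_solution_general
    (a b c d r s : ℚ)
    (hd : d ≠ 0)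
    (hq : a ^ 2 + b ^ 2 ≠ 0)
    (hrs : s ^ 2 + 3 * r ^ 2 = 2 * (a ^ 2 + b ^ 2)) :
    ∀ u₀ v₀ w₀ : ℚ, a * u₀ + b * v₀ + c * w₀ = 0 →
      ∃! p : ℚ × ℚ,
        u₀ = (-((r * a * c + d * b * s) / (a ^ 2 + b ^ 2))) * p.1 -
              (-((d * b * (s - 3 * r) + a * c * (r + s)) / (2 * (a ^ 2 + b ^ 2)))) * p.2 ∧
        v₀ = ((d * a * s - r * b * c) / (a ^ 2 + b ^ 2)) * p.1 -
              ((d * a * (s - 3 * r) - b * c * (r + s)) / (2 * (a ^ 2 + b ^ 2))) * p.2 ∧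
        w₀ = r * p.1 - ((r + s) / 2) * p.2 := by
  intro u₀ v₀ w₀ hplane
  simpa only [paramtwo, Prod.mk.injEq] using
    existsUnique_paramtwo_eq (x := (u₀, v₀, w₀)) hd hq hrs hplane

/-- Over ℚ, every point of the plane `a·u + b·v + c·w = 0` is
represented by a unique pair of parameters `(m, n)` through the coefficients
`m_u, n_u, m_v, n_v, m_w, n_w` of the parametrization (paramtwo). -/
theorem paramtwo_unique_solution
    (a b c d r s : ℚ)
    (heq : a ^ 2 + b ^ 2 + c ^ 2 = 3 * d ^ 2)
    (hd : d ≠ 0)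
    (hq : a ^ 2 + b ^ 2 ≠ 0)
    (hrs : s ^ 2 + 3 * r ^ 2 = 2 * (a ^ 2 + b ^ 2)) :
    ∀ u₀ v₀ w₀ : ℚ, a * u₀ + b * v₀ + c * w₀ = 0 →
      ∃! p : ℚ × ℚ,
        u₀ = (-((r * a * c + d * b * s) / (a ^ 2 + b ^ 2))) * p.1 -
              (-((d * b * (s - 3 * r) + a * c * (r + s)) / (2 * (a ^ 2 + b ^ 2)))) * p.2 ∧
        v₀ = ((d * a * s - r * b * c) / (a ^ 2 + b ^ 2)) * p.1 -
              ((d * a * (s - 3 * r) - b * c * (r + s)) / (2 * (a ^ 2 + b ^ 2))) * p.2 ∧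
        w₀ = r * p.1 - ((r + s) / 2) * p.2 :=
  paramtwo_unique_solution_general a b c d r s hd hq hrs
end

section
/- Let a, b, c, d be odd positive integers with a² + b² + c² = 3d² and gcd(a,b,c) = 1, and let ζ = gcd(d, c). If (u₀, v₀, w₀) ∈ ℤ³ satisfies a·u₀ + b·v₀ + c·w₀ = 0 and ζ² divides u₀² + v₀² + w₀², then a²·w₀² + 2·b·c·v₀·w₀ ≡ 0 (mod ζ²). -/
/-!
Using the plane equation to replace `2bcvw` by `(a u)² - (b v)² - (c w)²` and then
`a² + b² + c² = 3d²` to remove `b²`, the quantity `a²w² + 2bcvw` becomes `a²` times the squared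
norm of `(u, v, w)` plus multiples of `c²` and `d²`; each term is divisible by `gcd(d, c)²`.
-/

theorem sq_mul_sq_add_two_mul_eq_of_sum_sq_eq {R : Type*} [CommRing R] {a b c d u v w : R}
    (heq : a ^ 2 + b ^ 2 + c ^ 2 = 3 * d ^ 2) (hplane : a * u + b * v + c * w = 0) :
    a ^ 2 * w ^ 2 + 2 * b * c * v * w =
      a ^ 2 * (u ^ 2 + v ^ 2 + w ^ 2) + (v ^ 2 - w ^ 2) * c ^ 2 - 3 * v ^ 2 * d ^ 2 := by
  linear_combination -v ^ 2 * heq + (b * v + c * w - a * u) * hplane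

theorem sq_dvd_sq_mul_sq_add_two_mul_of_dvd {R : Type*} [CommRing R] {a b c d u v w m : R}
    (heq : a ^ 2 + b ^ 2 + c ^ 2 = 3 * d ^ 2) (hplane : a * u + b * v + c * w = 0)
    (hc : m ∣ c) (hd : m ∣ d) (hnorm : m ^ 2 ∣ u ^ 2 + v ^ 2 + w ^ 2) :
    m ^ 2 ∣ a ^ 2 * w ^ 2 + 2 * b * c * v * w := by
  rw [sq_mul_sq_add_two_mul_eq_of_sum_sq_eq heq hplane]
  have hc2 : m ^ 2 ∣ c ^ 2 := pow_dvd_pow_of_dvd hc 2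
  have hd2 : m ^ 2 ∣ d ^ 2 := pow_dvd_pow_of_dvd hd 2
  exact ((hnorm.mul_left _).add (hc2.mul_left _)).sub (hd2.mul_left _)

theorem key_congruence_general
    (a b c d : ℤ)
    (heq : a ^ 2 + b ^ 2 + c ^ 2 = 3 * d ^ 2)
    (u₀ v₀ w₀ : ℤ)
    (hplane : a * u₀ + b * v₀ + c * w₀ = 0)
    (hnorm : ((Int.gcd d c : ℤ)) ^ 2 ∣ u₀ ^ 2 + v₀ ^ 2 + w₀ ^ 2) :
    ((Int.gcd d c : ℤ)) ^ 2 ∣ a ^ 2 * w₀ ^ 2 + 2 * b * c * v₀ * w₀ :=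
  sq_dvd_sq_mul_sq_add_two_mul_of_dvd heq hplane (Int.gcd_dvd_right d c) (Int.gcd_dvd_left d c)
    hnorm

/-- Key congruence (equation (last)): if `(u₀, v₀, w₀)` lies in
the plane `a·u + b·v + c·w = 0` and `ζ²` divides its squared norm, where
`ζ = gcd(d, c)`, then `a²w₀² + 2bcv₀w₀ ≡ 0 (mod ζ²)`. -/
theorem key_congruence
    (a b c d : ℤ)
    (ha : 0 < a) (hb : 0 < b) (hc : 0 < c) (hd : 0 < d)
    (hao : Odd a) (hbo : Odd b) (hco : Odd c) (hdo : Odd d)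
    (heq : a ^ 2 + b ^ 2 + c ^ 2 = 3 * d ^ 2)
    (hgcd : Int.gcd a (Int.gcd b c) = 1)
    (u₀ v₀ w₀ : ℤ)
    (hplane : a * u₀ + b * v₀ + c * w₀ = 0)
    (hnorm : ((Int.gcd d c : ℤ)) ^ 2 ∣ u₀ ^ 2 + v₀ ^ 2 + w₀ ^ 2) :
    ((Int.gcd d c : ℤ)) ^ 2 ∣ a ^ 2 * w₀ ^ 2 + 2 * b * c * v₀ * w₀ :=
  key_congruence_general a b c d heq u₀ v₀ w₀ hplane hnorm
end

section
/- Let a, b, c, d be odd positive integers with a² + b² + c² = 3d² and gcd(a,b,c) = 1, and let ζ = gcd(d, c). If (u₀, v₀, w₀) ∈ ℤ³ satisfies a·u₀ + b·v₀ + c·w₀ = 0 and ζ² divides u₀² + v₀² + w₀², then ζ divides w₀. -/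
/-!
Eliminating `a * u₀` with the plane equation and using `a² + b² + c² = 3 d²` gives the identity
`b w₀ (b w₀ - 2 c v₀) = 3 d² (v₀² + w₀²) - c² v₀² - a² (u₀² + v₀² + w₀²)`, whose right-hand side is
divisible by `ζ²` since `ζ` divides `c` and `d`. The two factors on the left are congruent modulo `ζ`,
and when `ζ²` divides a product of two numbers congruent modulo `ζ`, `ζ` divides each of them.
Hence `ζ ∣ b w₀`, and `b` is coprime to `ζ`: a common factor of `b`, `c`, `d` also divides `a`.
-/

theorem Int.dvd_of_sq_dvd_mul_of_dvd_sub {z x y : ℤ} (hmul : z ^ 2 ∣ x * y) (hsub : z ∣ x - y) :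
    z ∣ x := by
  rcases eq_or_ne x 0 with rfl | hx
  · exact dvd_zero z
  -- With `x = x' g`, `z = z' g` for `g = gcd x z`, `z'` is coprime to `x'`; so `z' ∣ x' y'` forces
  -- `z' ∣ y'`, and then `z' ∣ x'`.
  obtain ⟨x', z', hcop, hx', hz'⟩ := Int.exists_gcd_one (Int.gcd_pos_of_ne_zero_left z hx)
  set g : ℤ := (Int.gcd x z : ℤ)
  have hg : g ≠ 0 := by simp [g, Int.gcd_eq_zero_iff, hx]
  have hgy : g ∣ y := by
    have hgz : g ∣ z := ⟨z', by rw [hz', mul_comm]⟩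
    have hgx : g ∣ x := ⟨x', by rw [hx', mul_comm]⟩
    simpa using dvd_sub hgx (hgz.trans hsub)
  obtain ⟨y', hy'⟩ := hgy
  have hcop' : IsCoprime z' x' := (Int.isCoprime_iff_gcd_eq_one.mpr hcop).symm
  have hmul' : z' ^ 2 ∣ x' * y' := by
    rw [hx', hz', hy'] at hmul
    refine (mul_dvd_mul_iff_left (pow_ne_zero 2 hg)).mp ?_
    rwa [show g ^ 2 * z' ^ 2 = (z' * g) ^ 2 by ring, show g ^ 2 * (x' * y') = x' * g * (g * y') by ring]
  have hsub' : z' ∣ x' - y' := by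
    rw [hx', hz', hy'] at hsub
    refine (mul_dvd_mul_iff_left hg).mp ?_
    rwa [show g * z' = z' * g by ring, show g * (x' - y') = x' * g - g * y' by ring]
  have hy'' : z' ∣ y' := hcop'.dvd_of_dvd_mul_left ((dvd_pow_self z' two_ne_zero).trans hmul')
  rw [hx', hz']
  exact mul_dvd_mul_right (by simpa using dvd_add hsub' hy'') g

theorem Int.isCoprime_gcd_of_sq_add_sq_add_sq_eq {a b c d k : ℤ}
    (heq : a ^ 2 + b ^ 2 + c ^ 2 = k * d ^ 2) (hgcd : Int.gcd a (Int.gcd b c) = 1) :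
    IsCoprime b (Int.gcd d c) := by
  rw [Int.isCoprime_iff_gcd_eq_one]
  set g : ℤ := (Int.gcd b (Int.gcd d c) : ℤ)
  have hgb : g ∣ b := Int.gcd_dvd_left _ _
  have hgd : g ∣ d := (Int.gcd_dvd_right _ _).trans (Int.gcd_dvd_left _ _)
  have hgc : g ∣ c := (Int.gcd_dvd_right _ _).trans (Int.gcd_dvd_right _ _)
  have hga : g ∣ a := by
    rw [← Int.pow_dvd_pow_iff two_ne_zero, show a ^ 2 = k * d ^ 2 - b ^ 2 - c ^ 2 by linarith]
    exact dvd_sub (dvd_sub ((pow_dvd_pow_of_dvd hgd 2).mul_left k) (pow_dvd_pow_of_dvd hgb 2))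
      (pow_dvd_pow_of_dvd hgc 2)
  have hg1 : g ∣ 1 := by
    simpa [hgcd] using Int.dvd_coe_gcd hga (Int.dvd_coe_gcd hgb hgc)
  exact_mod_cast Int.eq_one_of_dvd_one (Int.natCast_nonneg _) hg1

theorem Int.sq_dvd_mul_sub_of_mem_plane {a b c d k u v w z : ℤ}
    (heq : a ^ 2 + b ^ 2 + c ^ 2 = k * d ^ 2) (hplane : a * u + b * v + c * w = 0)
    (hc : z ∣ c) (hd : z ∣ d) (hnorm : z ^ 2 ∣ u ^ 2 + v ^ 2 + w ^ 2) :
    z ^ 2 ∣ b * w * (b * w - 2 * c * v) := by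
  obtain ⟨c', rfl⟩ := hc
  obtain ⟨d', rfl⟩ := hd
  obtain ⟨n, hn⟩ := hnorm
  exact ⟨k * d' ^ 2 * (v ^ 2 + w ^ 2) - c' ^ 2 * v ^ 2 - a ^ 2 * n, by
    linear_combination (a * u - b * v - z * c' * w) * hplane + (v ^ 2 + w ^ 2) * heq - a ^ 2 * hn⟩

theorem zeta_dvd_w0_general
    (a b c d : ℤ)
    (heq : a ^ 2 + b ^ 2 + c ^ 2 = 3 * d ^ 2)
    (hgcd : Int.gcd a (Int.gcd b c) = 1)
    (u₀ v₀ w₀ : ℤ)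
    (hplane : a * u₀ + b * v₀ + c * w₀ = 0)
    (hnorm : ((Int.gcd d c : ℤ)) ^ 2 ∣ u₀ ^ 2 + v₀ ^ 2 + w₀ ^ 2) :
    ((Int.gcd d c : ℤ)) ∣ w₀ := by
  have hc : (Int.gcd d c : ℤ) ∣ c := Int.gcd_dvd_right _ _
  have hkey := Int.sq_dvd_mul_sub_of_mem_plane heq hplane hc (Int.gcd_dvd_left _ _) hnorm
  have hbw : (Int.gcd d c : ℤ) ∣ b * w₀ :=
    Int.dvd_of_sq_dvd_mul_of_dvd_sub hkey (by simpa using (hc.mul_left 2).mul_right v₀)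
  exact (Int.isCoprime_gcd_of_sq_add_sq_add_sq_eq heq hgcd).symm.dvd_of_dvd_mul_left hbw

/-- If `(u₀, v₀, w₀)` lies in the plane `a·u + b·v + c·w = 0` and
`ζ² = gcd(d, c)²` divides its squared norm, then `ζ` divides `w₀`. -/
theorem zeta_dvd_w0
    (a b c d : ℤ)
    (ha : 0 < a) (hb : 0 < b) (hc : 0 < c) (hd : 0 < d)
    (hao : Odd a) (hbo : Odd b) (hco : Odd c) (hdo : Odd d)
    (heq : a ^ 2 + b ^ 2 + c ^ 2 = 3 * d ^ 2)
    (hgcd : Int.gcd a (Int.gcd b c) = 1)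
    (u₀ v₀ w₀ : ℤ)
    (hplane : a * u₀ + b * v₀ + c * w₀ = 0)
    (hnorm : ((Int.gcd d c : ℤ)) ^ 2 ∣ u₀ ^ 2 + v₀ ^ 2 + w₀ ^ 2) :
    ((Int.gcd d c : ℤ)) ∣ w₀ :=
  zeta_dvd_w0_general a b c d heq hgcd u₀ v₀ w₀ hplane hnorm
end

section
/- Let a, b, c, d be odd positive integers with a² + b² + c² = 3d² and gcd(a,b,c) = 1. If P = (u₀, v₀, w₀) and Q = (x₀, y₀, z₀) are distinct nonzero points of ℤ³ with a·u₀ + b·v₀ + c·w₀ = 0, a·x₀ + b·y₀ + c·z₀ = 0, and |OP| = |OQ| = |PQ| (where O = (0,0,0)), then there exist integers α, β such that the common squared side length satisfies u₀² + v₀² + w₀² = 2d²(α² − αβ + β²). -/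
/-
The vertex `P` lies in the lattice `L = {x ⊥ A : A × x ≡ 0 mod d}`, `A = (a, b, c)`: the vectors
`d • (2Q - P)` and `A × P` are both orthogonal to `P` and `A` and have squared length `3d²|P|²`,
so they agree up to sign.

Since `a, b, c, d` are odd and `|A|² = 3d²`, the map `x ↦ (y - x) / 2`, where `A × x = d • y`, is
the rotation by `2π/3` about `A`, and it preserves `L`. A shortest nonzero `e ∈ L` and its rotation
`f` therefore span `L` (rounding coordinates in the basis `e, f` would otherwise produce a shorter
vector), so `|x|² = |e|²(m² - mn + n²)` on `L`. Finally `e × f = τ • A` with `|e|² = 2dτ`, and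
`τ = ±d`: `d ∣ τ` because `τ • (A × p) ∈ L` for `A ⬝ p = 1`, while `τ / d` divides every
`(A × x) ⬝ (A × y)`, and these have no common prime factor as `A` is primitive.
-/

open Matrix

section CrossProduct

variable {R : Type*} [CommRing R]

theorem cross_eq_smul_of_dotProduct_eq_zero {A p x y : Fin 3 → R} (hp : A ⬝ᵥ p = 1)
    (hx : A ⬝ᵥ x = 0) (hy : A ⬝ᵥ y = 0) : x ⨯₃ y = ((x ⨯₃ y) ⬝ᵥ p) • A := by
  have h : x ⨯₃ y ⨯₃ A = 0 := by
    rw [cross_cross_eq_smul_sub_smul, dotProduct_comm x, dotProduct_comm y, hx, hy]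
    simp only [zero_smul, sub_zero]
  have := cross_cross_eq_smul_sub_smul (x ⨯₃ y) A p
  rw [h, hp, map_zero, LinearMap.zero_apply, one_smul] at this
  linear_combination (norm := module) this

theorem triple_product_smul_eq (e f g x : Fin 3 → R) :
    ((e ⨯₃ f) ⬝ᵥ g) • x = ((x ⨯₃ f) ⬝ᵥ g) • e + ((e ⨯₃ x) ⬝ᵥ g) • f + ((e ⨯₃ f) ⬝ᵥ x) • g := by
  ext i
  fin_cases i <;>
    simp only [dotProduct, cross_apply, Fin.sum_univ_three, cons_val_zero, cons_val_one, cons_val,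
      Fin.isValue, Fin.zero_eta, Fin.mk_one, Fin.reduceFinMk, Pi.smul_apply, smul_eq_mul,
      Pi.add_apply] <;>
    ring

theorem cross_smul_add_smul (e f : Fin 3 → R) (m n m' n' : R) :
    (m • e + n • f) ⨯₃ (m' • e + n' • f) = (m * n' - n * m') • (e ⨯₃ f) := by
  simp only [map_add, map_smul, LinearMap.add_apply, LinearMap.smul_apply, cross_self,
    ← cross_anticomm e f]
  module

theorem eq_or_eq_neg_of_cross_eq_zero [LinearOrder R] [IsStrictOrderedRing R] {u v : Fin 3 → R}
    (h : u ⨯₃ v = 0) (hn : u ⬝ᵥ u = v ⬝ᵥ v) : u = v ∨ u = -v := by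
  have hl := cross_dot_cross u v u v
  rw [h, zero_dotProduct, dotProduct_comm v u, ← hn] at hl
  have hsq : (u ⬝ᵥ v) ^ 2 = (u ⬝ᵥ u) ^ 2 := by linear_combination hl
  rcases sq_eq_sq_iff_eq_or_eq_neg.mp hsq with huv | huv
  · left
    rw [← sub_eq_zero, ← dotProduct_self_eq_zero]
    simp only [sub_dotProduct, dotProduct_sub, dotProduct_comm v u]
    linear_combination -2 * huv - hn
  · right
    rw [← sub_eq_zero, sub_neg_eq_add, ← dotProduct_self_eq_zero]
    simp only [add_dotProduct, dotProduct_add, dotProduct_comm v u]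
    linear_combination 2 * huv - hn

end CrossProduct

theorem dotProduct_self_nonneg {ι R : Type*} [Fintype ι] [Ring R] [LinearOrder R]
    [IsStrictOrderedRing R] (v : ι → R) : 0 ≤ v ⬝ᵥ v :=
  Finset.sum_nonneg fun i _ => mul_self_nonneg (v i)

theorem dotProduct_smul_add_smul_self {ι R : Type*} [Fintype ι] [CommRing R] {e f : ι → R}
    (hff : f ⬝ᵥ f = e ⬝ᵥ e) (hef : 2 * (e ⬝ᵥ f) = -(e ⬝ᵥ e)) (m n : R) :
    (m • e + n • f) ⬝ᵥ (m • e + n • f) = e ⬝ᵥ e * (m ^ 2 - m * n + n ^ 2) := by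
  simp only [add_dotProduct, dotProduct_add, smul_dotProduct, dotProduct_smul, smul_eq_mul,
    dotProduct_comm f e]
  linear_combination n ^ 2 * hff + m * n * hef

theorem exists_mem_ne_zero_forall_le {ι : Type*} [Fintype ι] {L : AddSubgroup (ι → ℤ)}
    {x : ι → ℤ} (hx : x ∈ L) (hx0 : x ≠ 0) :
    ∃ e ∈ L, e ≠ 0 ∧ ∀ x ∈ L, x ≠ 0 → e ⬝ᵥ e ≤ x ⬝ᵥ x := by
  obtain ⟨g, ⟨e, he, he0, rfl⟩, hmin⟩ := Int.exists_least_of_bdd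
    (P := fun g => ∃ e ∈ L, e ≠ 0 ∧ e ⬝ᵥ e = g)
    ⟨0, fun _ ⟨e, _, _, he⟩ => he ▸ dotProduct_self_nonneg e⟩ ⟨_, x, hx, hx0, rfl⟩
  exact ⟨e, he, he0, fun y hy hy0 => hmin _ ⟨y, hy, hy0, rfl⟩⟩

theorem Int.exists_eq_mul_add_four_mul_sq_le (μ : ℤ) {τ : ℤ} (hτ : τ ≠ 0) :
    ∃ m r : ℤ, μ = m * τ + r ∧ 4 * r ^ 2 ≤ τ ^ 2 := by
  have hn : 0 < τ.natAbs := Int.natAbs_pos.mpr hτ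
  have hlo := Int.le_bmod (x := μ) hn
  have hhi := Int.bmod_le (x := μ) hn
  refine ⟨μ.bdiv τ.natAbs * τ.sign, μ.bmod τ.natAbs, ?_, ?_⟩
  · conv_lhs => rw [← Int.bdiv_add_bmod μ τ.natAbs, ← Int.sign_mul_self]
    ring
  · have hr : -(τ.natAbs : ℤ) ≤ 2 * μ.bmod τ.natAbs ∧ 2 * μ.bmod τ.natAbs ≤ τ.natAbs := by omega
    rw [← Int.natAbs_sq τ]
    nlinarith

theorem exists_vec3_dotProduct_eq_one {a b c : ℤ} (h : Int.gcd a (Int.gcd b c) = 1) :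
    ∃ p : Fin 3 → ℤ, ![a, b, c] ⬝ᵥ p = 1 := by
  obtain ⟨u, v, huv⟩ := Int.isCoprime_iff_gcd_eq_one.mpr h
  refine ⟨![u, v * Int.gcdA b c, v * Int.gcdB b c], ?_⟩
  simp only [dotProduct_cons, head_cons, tail_cons, dotProduct_of_isEmpty, add_zero]
  linear_combination huv - v * Int.gcd_eq_gcd_ab b c

section Plane

variable {A p : Fin 3 → ℤ}

theorem dotProduct_self_ne_zero_of_dotProduct_eq_one (hp : A ⬝ᵥ p = 1) : A ⬝ᵥ A ≠ 0 := by
  rintro h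
  rw [dotProduct_self_eq_zero.mp h, zero_dotProduct] at hp
  exact zero_ne_one hp

theorem exists_smul_eq_add_smul_of_cross_eq (hp : A ⬝ᵥ p = 1) {e f x : Fin 3 → ℤ} {τ : ℤ}
    (he : A ⬝ᵥ e = 0) (hf : A ⬝ᵥ f = 0) (hx : A ⬝ᵥ x = 0) (hτ : e ⨯₃ f = τ • A) :
    ∃ μ ν : ℤ, τ • x = μ • e + ν • f := by
  refine ⟨(x ⨯₃ f) ⬝ᵥ p, (e ⨯₃ x) ⬝ᵥ p, ?_⟩
  have h := triple_product_smul_eq e f A x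
  rw [cross_eq_smul_of_dotProduct_eq_zero hp hx hf, cross_eq_smul_of_dotProduct_eq_zero hp he hx,
    hτ] at h
  simp only [smul_dotProduct, hx, smul_eq_mul] at h
  apply smul_right_injective _ (dotProduct_self_ne_zero_of_dotProduct_eq_one hp)
  linear_combination (norm := module) h

theorem exists_eq_smul_add_smul_of_forall_le {L : AddSubgroup (Fin 3 → ℤ)} {e f : Fin 3 → ℤ}
    {τ : ℤ} (hp : A ⬝ᵥ p = 1) (hL : ∀ x ∈ L, A ⬝ᵥ x = 0) (he : e ∈ L) (hf : f ∈ L) (he0 : e ≠ 0)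
    (hmin : ∀ x ∈ L, x ≠ 0 → e ⬝ᵥ e ≤ x ⬝ᵥ x) (hff : f ⬝ᵥ f = e ⬝ᵥ e)
    (hef : 2 * (e ⬝ᵥ f) = -(e ⬝ᵥ e)) (hτ : e ⨯₃ f = τ • A) (hτ0 : τ ≠ 0) {x : Fin 3 → ℤ}
    (hx : x ∈ L) : ∃ m n : ℤ, x = m • e + n • f := by
  obtain ⟨μ, ν, hμν⟩ := exists_smul_eq_add_smul_of_cross_eq hp (hL e he) (hL f hf) (hL x hx) hτ
  obtain ⟨m, r, rfl, hr⟩ := Int.exists_eq_mul_add_four_mul_sq_le μ hτ0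
  obtain ⟨n, s, rfl, hs⟩ := Int.exists_eq_mul_add_four_mul_sq_le ν hτ0
  refine ⟨m, n, ?_⟩
  set y := x - (m • e + n • f) with hy_def
  have hy : y ∈ L := L.sub_mem hx (L.add_mem (L.zsmul_mem he m) (L.zsmul_mem hf n))
  have hτy : τ • y = r • e + s • f := by
    rw [hy_def, smul_sub, hμν]
    module
  have hnorm : τ ^ 2 * (y ⬝ᵥ y) = e ⬝ᵥ e * (r ^ 2 - r * s + s ^ 2) := by
    rw [← dotProduct_smul_add_smul_self hff hef, ← hτy, smul_dotProduct, dotProduct_smul]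
    simp only [smul_eq_mul]
    ring
  have hg : 0 < e ⬝ᵥ e :=
    (dotProduct_self_nonneg e).lt_of_ne' (dotProduct_self_eq_zero.not.mpr he0)
  by_contra hne
  have hle := hmin y hy (sub_ne_zero.mpr hne)
  have hτ2 : 0 < τ ^ 2 := by positivity
  nlinarith [sq_nonneg (r + s), mul_le_mul_of_nonneg_left hle hτ2.le]

theorem isUnit_of_forall_dvd_cross_dotProduct_cross (hp : A ⬝ᵥ p = 1) {ρ : ℤ}
    (h : ∀ x y, ρ ∣ (A ⨯₃ x) ⬝ᵥ (A ⨯₃ y)) : IsUnit ρ := by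
  rw [Int.isUnit_iff_natAbs_eq]
  by_contra hρ
  obtain ⟨q, hq, hqρ⟩ := Int.exists_prime_and_dvd hρ
  have hG : ∀ i j, q ∣ (A ⬝ᵥ A) * (Pi.single i 1 : Fin 3 → ℤ) j - A j * A i := by
    intro i j
    have := hqρ.trans (h (Pi.single i 1) (Pi.single j 1))
    simpa [cross_dot_cross, dotProduct_single, single_dotProduct] using this
  have hqS : q ∣ A ⬝ᵥ A := by
    have h01 : q ∣ A 1 * A 0 := by simpa using hG 0 1
    obtain ⟨k, hk⟩ : ∃ k, q ∣ A k * A k := by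
      rcases hq.dvd_or_dvd h01 with h1 | h0
      · exact ⟨1, dvd_mul_of_dvd_left h1 _⟩
      · exact ⟨0, dvd_mul_of_dvd_left h0 _⟩
    simpa using dvd_add (hG k k) hk
  have hqA : ∀ i, q ∣ A i := fun i =>
    hq.dvd_of_dvd_pow (n := 2) (by simpa [sq] using (dvd_sub hqS (hG i i)))
  have hq1 : q ∣ A ⬝ᵥ p := Finset.dvd_sum fun i _ => dvd_mul_of_dvd_left (hqA i) _
  exact hq.not_isUnit (isUnit_of_dvd_one (hp ▸ hq1))

end Plane

def hexLattice (A : Fin 3 → ℤ) (d : ℤ) : AddSubgroup (Fin 3 → ℤ) where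
  carrier := {x | A ⬝ᵥ x = 0 ∧ ∃ y, A ⨯₃ x = d • y}
  add_mem' := by
    rintro x x' ⟨hx, y, hy⟩ ⟨hx', y', hy'⟩
    exact ⟨by rw [dotProduct_add, hx, hx', add_zero], y + y', by rw [map_add, hy, hy', smul_add]⟩
  zero_mem' := ⟨dotProduct_zero A, 0, by simp⟩
  neg_mem' := by
    rintro x ⟨hx, y, hy⟩
    exact ⟨by rw [dotProduct_neg, hx, neg_zero], -y, by rw [map_neg, hy, smul_neg]⟩

section HexLattice

variable {A p : Fin 3 → ℤ} {d : ℤ}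

theorem exists_sub_eq_two_smul (hA : ∀ i, Odd (A i)) (hd : Odd d) {x y : Fin 3 → ℤ}
    (hx : A ⬝ᵥ x = 0) (hy : A ⨯₃ x = d • y) : ∃ z, y - x = (2 : ℤ) • z := by
  have hA' : ∀ i, ¬Even (A i) := fun i => Int.not_even_iff_odd.mpr (hA i)
  have hd' : ¬Even d := Int.not_even_iff_odd.mpr hd
  -- Mod 2, `A ≡ (1, 1, 1)` and `d ≡ 1`, so `y ≡ (x₁ + x₂, x₂ + x₀, x₀ + x₁) ≡ x` as `∑ xᵢ` is even.
  have hx' := congrArg Even hx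
  rw [vec3_dotProduct] at hx'
  have h : ∀ i, Even (y i - x i) := by
    intro i
    have hyi := congrArg Even (congrFun hy i)
    fin_cases i <;>
      simp only [Fin.zero_eta, Fin.mk_one, Fin.reduceFinMk, Fin.isValue, cross_apply, cons_val_zero,
        cons_val_one, cons_val, Pi.smul_apply, Int.zsmul_eq_mul, Int.even_sub, Int.even_add,
        Int.even_mul, hA', hd', false_or, eq_iff_iff, Even.zero, iff_true] at hyi hx' ⊢ <;>
      tauto
  choose z hz using fun i => even_iff_two_dvd.mp (h i)
  exact ⟨z, funext fun i => by simp [hz i]⟩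

theorem exists_rotation_mem_hexLattice (hA : ∀ i, Odd (A i)) (hd : Odd d)
    (hS : A ⬝ᵥ A = 3 * d ^ 2) {x : Fin 3 → ℤ} (hx : x ∈ hexLattice A d) :
    ∃ x' ∈ hexLattice A d, x' ⬝ᵥ x' = x ⬝ᵥ x ∧ 2 * (x ⬝ᵥ x') = -(x ⬝ᵥ x) ∧
      (2 * d) • (x ⨯₃ x') = (x ⬝ᵥ x) • A := by
  obtain ⟨hxA, y, hy⟩ := hx
  obtain ⟨x', hx'⟩ := exists_sub_eq_two_smul hA hd hxA hy
  have hd0 : d ≠ 0 := by rintro rfl; simp at hd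
  have hAy : A ⬝ᵥ y = 0 := by
    simpa only [hy, dotProduct_smul, smul_eq_mul, mul_eq_zero, hd0, false_or] using
      dot_self_cross A x
  have hxy : x ⬝ᵥ y = 0 := by
    simpa only [hy, dotProduct_smul, smul_eq_mul, mul_eq_zero, hd0, false_or] using
      dot_cross_self A x
  have hyy : y ⬝ᵥ y = 3 * (x ⬝ᵥ x) := by
    have h := cross_dot_cross A x A x
    rw [hy, hS, hxA, dotProduct_comm x A, hxA, smul_dotProduct, dotProduct_smul] at h
    simp only [smul_eq_mul] at h
    exact mul_left_cancel₀ (pow_ne_zero 2 hd0) (by linear_combination h)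
  have hAcy : A ⨯₃ y = (-3 * d) • x := by
    apply smul_right_injective _ hd0
    have h := cross_cross_eq_smul_sub_smul' A A x
    rw [hy, map_smul, hxA, hS] at h
    linear_combination (norm := module) h
  have hy' : y = x + (2 : ℤ) • x' := by rw [← hx']; abel
  subst hy'
  refine ⟨x', ⟨?_, -((2 : ℤ) • x + x'), ?_⟩, ?_, ?_, ?_⟩
  · simp only [dotProduct_add, dotProduct_smul, hxA, smul_eq_mul] at hAy
    linarith
  · apply smul_right_injective _ (two_ne_zero (α := ℤ))
    simp only [map_add, map_smul] at hAcy hy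
    dsimp only
    linear_combination (norm := module) hAcy - hy
  · simp only [dotProduct_add, add_dotProduct, dotProduct_smul, smul_dotProduct, smul_eq_mul,
      dotProduct_comm x' x] at hyy hxy
    linarith
  · simp only [dotProduct_add, dotProduct_smul, smul_eq_mul] at hxy
    linarith
  · have h := cross_cross_eq_smul_sub_smul' x A x
    rw [hy, hxA, map_smul, map_add, map_smul, cross_self] at h
    linear_combination (norm := module) h

theorem mem_hexLattice_of_equilateral (hS : A ⬝ᵥ A = 3 * d ^ 2) {P Q : Fin 3 → ℤ}
    (hP : A ⬝ᵥ P = 0) (hQ : A ⬝ᵥ Q = 0) (hPQ : 2 * (P ⬝ᵥ Q) = P ⬝ᵥ P) (hQQ : Q ⬝ᵥ Q = P ⬝ᵥ P) :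
    P ∈ hexLattice A d := by
  set T := d • ((2 : ℤ) • Q - P)
  have hTP : T ⬝ᵥ P = 0 := by
    simp only [T, smul_dotProduct, sub_dotProduct, dotProduct_comm Q P, smul_eq_mul]
    linear_combination d * hPQ
  have hAT : A ⬝ᵥ T = 0 := by
    simp only [T, dotProduct_smul, dotProduct_sub, hP, hQ, smul_eq_mul]
    ring
  have hcross : T ⨯₃ (A ⨯₃ P) = 0 := by
    rw [cross_cross_eq_smul_sub_smul', hTP, hAT, zero_smul, zero_smul, sub_zero]
  have hnorm : T ⬝ᵥ T = (A ⨯₃ P) ⬝ᵥ (A ⨯₃ P) := by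
    simp only [T, cross_dot_cross, hS, hP, dotProduct_smul, smul_dotProduct, sub_dotProduct,
      dotProduct_sub, dotProduct_comm Q P, smul_eq_mul]
    linear_combination (-2 * d ^ 2) * hPQ + 4 * d ^ 2 * hQQ
  refine ⟨hP, ?_⟩
  rcases eq_or_eq_neg_of_cross_eq_zero hcross hnorm with h | h
  · exact ⟨_, h.symm⟩
  · exact ⟨-((2 : ℤ) • Q - P), by rw [smul_neg, ← neg_eq_iff_eq_neg.mpr h]⟩

theorem dvd_of_forall_smul_mem_hexLattice (hp : A ⬝ᵥ p = 1) (hS : A ⬝ᵥ A = 3 * d ^ 2) {τ : ℤ}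
    (h : ∀ y, A ⬝ᵥ y = 0 → τ • y ∈ hexLattice A d) : d ∣ τ := by
  obtain ⟨-, z, hz⟩ := h (A ⨯₃ p) (dot_self_cross A p)
  rw [map_smul, cross_cross_eq_smul_sub_smul', hp, hS] at hz
  have hτA : τ • A = d • (z + (3 * d * τ) • p) := by linear_combination (norm := module) hz
  refine ⟨(z + (3 * d * τ) • p) ⬝ᵥ p, ?_⟩
  calc τ = (τ • A) ⬝ᵥ p := by rw [smul_dotProduct, hp, smul_eq_mul, mul_one]
    _ = _ := by rw [hτA, smul_dotProduct, smul_eq_mul]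

theorem dvd_mul_cross_dotProduct_cross (hS : A ⬝ᵥ A = 3 * d ^ 2) (hA0 : A ≠ 0) {e f : Fin 3 → ℤ}
    {τ : ℤ} (hτ : e ⨯₃ f = τ • A) (hspan : ∀ x ∈ hexLattice A d, ∃ m n : ℤ, x = m • e + n • f)
    (x y : Fin 3 → ℤ) : τ ∣ d * ((A ⨯₃ x) ⬝ᵥ (A ⨯₃ y)) := by
  have hu : A ⨯₃ (A ⨯₃ x) ∈ hexLattice A d := by
    refine ⟨dot_self_cross A _, (-3 * d) • (A ⨯₃ x), ?_⟩
    rw [cross_cross_eq_smul_sub_smul' A A (A ⨯₃ x), dot_self_cross, hS]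
    module
  have hv : d • (A ⨯₃ y) ∈ hexLattice A d :=
    ⟨by rw [dotProduct_smul, dot_self_cross, smul_zero], A ⨯₃ (A ⨯₃ y), map_smul _ _ _⟩
  obtain ⟨m, n, hmn⟩ := hspan _ hu
  obtain ⟨m', n', hmn'⟩ := hspan _ hv
  have h1 : (A ⨯₃ (A ⨯₃ x)) ⨯₃ (d • (A ⨯₃ y)) = ((m * n' - n * m') * τ) • A := by
    rw [hmn, hmn', cross_smul_add_smul, hτ, smul_smul]
  have h2 : (A ⨯₃ (A ⨯₃ x)) ⨯₃ (d • (A ⨯₃ y)) = (-(d * ((A ⨯₃ x) ⬝ᵥ (A ⨯₃ y)))) • A := by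
    rw [map_smul, cross_cross_eq_smul_sub_smul, dot_self_cross, zero_smul, zero_sub, smul_neg,
      smul_smul, neg_smul]
  have h := smul_left_injective ℤ hA0 (h1.symm.trans h2)
  exact ⟨-(m * n' - n * m'), by linear_combination h⟩

theorem eq_or_eq_neg_of_span_hexLattice (hS : A ⬝ᵥ A = 3 * d ^ 2) (hp : A ⬝ᵥ p = 1) (hd0 : d ≠ 0)
    {e f : Fin 3 → ℤ} {τ : ℤ} (he : e ∈ hexLattice A d) (hf : f ∈ hexLattice A d)
    (hτ : e ⨯₃ f = τ • A) (hspan : ∀ x ∈ hexLattice A d, ∃ m n : ℤ, x = m • e + n • f) :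
    τ = d ∨ τ = -d := by
  obtain ⟨ρ, rfl⟩ : d ∣ τ := dvd_of_forall_smul_mem_hexLattice hp hS fun y hy => by
    obtain ⟨μ, ν, h⟩ := exists_smul_eq_add_smul_of_cross_eq hp he.1 hf.1 hy hτ
    rw [h]
    exact add_mem (zsmul_mem he μ) (zsmul_mem hf ν)
  have hρ : IsUnit ρ := isUnit_of_forall_dvd_cross_dotProduct_cross hp fun x y =>
    (mul_dvd_mul_iff_left hd0).mp <|
      dvd_mul_cross_dotProduct_cross hS (fun h => by simp [h] at hp) hτ hspan x y
  rcases Int.isUnit_iff.mp hρ with rfl | rfl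
  · exact Or.inl (mul_one d)
  · exact Or.inr (mul_neg_one d)

theorem exists_dotProduct_self_eq_of_mem_hexLattice (hA : ∀ i, Odd (A i)) (hd : Odd d)
    (hS : A ⬝ᵥ A = 3 * d ^ 2) (hp : A ⬝ᵥ p = 1) {x : Fin 3 → ℤ} (hx : x ∈ hexLattice A d) :
    ∃ α β : ℤ, x ⬝ᵥ x = 2 * d ^ 2 * (α ^ 2 - α * β + β ^ 2) := by
  rcases eq_or_ne x 0 with rfl | hx0
  · exact ⟨0, 0, by simp⟩
  have hd0 : d ≠ 0 := by rintro rfl; simp at hd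
  have hL : ∀ y ∈ hexLattice A d, A ⬝ᵥ y = 0 := fun y hy => hy.1
  obtain ⟨e, he, he0, hmin⟩ := exists_mem_ne_zero_forall_le hx hx0
  obtain ⟨f, hf, hff, hef, hcross⟩ := exists_rotation_mem_hexLattice hA hd hS he
  set τ := (e ⨯₃ f) ⬝ᵥ p
  have hgτ : e ⬝ᵥ e = 2 * d * τ := by
    have h := congrArg (· ⬝ᵥ p) hcross
    simp only [smul_dotProduct, hp, smul_eq_mul, mul_one] at h
    linear_combination -h
  have hτ : e ⨯₃ f = τ • A := smul_right_injective _ (mul_ne_zero two_ne_zero hd0) <| by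
    dsimp only
    rw [hcross, hgτ, smul_smul]
  have hg : 0 < e ⬝ᵥ e :=
    (dotProduct_self_nonneg e).lt_of_ne' (dotProduct_self_eq_zero.not.mpr he0)
  have hτ0 : τ ≠ 0 := by rintro h; rw [h, mul_zero] at hgτ; linarith
  have hspan : ∀ y ∈ hexLattice A d, ∃ m n : ℤ, y = m • e + n • f := fun y hy =>
    exists_eq_smul_add_smul_of_forall_le hp hL he hf he0 hmin hff hef hτ hτ0 hy
  have hg2 : e ⬝ᵥ e = 2 * d ^ 2 := by
    rcases eq_or_eq_neg_of_span_hexLattice hS hp hd0 he hf hτ hspan with h | h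
    · linear_combination hgτ + 2 * d * h
    · have : e ⬝ᵥ e = -(2 * d ^ 2) := by linear_combination hgτ + 2 * d * h
      linarith [sq_pos_of_ne_zero hd0]
  obtain ⟨m, n, rfl⟩ := hspan x hx
  exact ⟨m, n, by rw [dotProduct_smul_add_smul_self hff hef, hg2]⟩

end HexLattice

theorem side_length_form_general
    (a b c d : ℤ)
    (hao : Odd a) (hbo : Odd b) (hco : Odd c) (hdo : Odd d)
    (heq : a ^ 2 + b ^ 2 + c ^ 2 = 3 * d ^ 2)
    (hgcd : Int.gcd a (Int.gcd b c) = 1)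
    (u₀ v₀ w₀ x₀ y₀ z₀ : ℤ)
    (hplaneP : a * u₀ + b * v₀ + c * w₀ = 0)
    (hplaneQ : a * x₀ + b * y₀ + c * z₀ = 0)
    (heq1 : u₀ ^ 2 + v₀ ^ 2 + w₀ ^ 2 = x₀ ^ 2 + y₀ ^ 2 + z₀ ^ 2)
    (heq2 : u₀ ^ 2 + v₀ ^ 2 + w₀ ^ 2 =
      (u₀ - x₀) ^ 2 + (v₀ - y₀) ^ 2 + (w₀ - z₀) ^ 2) :
    ∃ α β : ℤ, u₀ ^ 2 + v₀ ^ 2 + w₀ ^ 2 = 2 * d ^ 2 * (α ^ 2 - α * β + β ^ 2) := by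
  obtain ⟨p, hp⟩ := exists_vec3_dotProduct_eq_one hgcd
  have hA : ∀ i, Odd (![a, b, c] i) := by
    intro i
    fin_cases i <;> assumption
  have hS : ![a, b, c] ⬝ᵥ ![a, b, c] = 3 * d ^ 2 := by
    simp only [dotProduct_cons, head_cons, tail_cons, dotProduct_of_isEmpty, add_zero]
    linear_combination heq
  have hmem : ![u₀, v₀, w₀] ∈ hexLattice ![a, b, c] d := by
    refine mem_hexLattice_of_equilateral hS (Q := ![x₀, y₀, z₀]) ?_ ?_ ?_ ?_ <;>
      simp only [dotProduct_cons, head_cons, tail_cons, dotProduct_of_isEmpty, add_zero]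
    · linear_combination hplaneP
    · linear_combination hplaneQ
    · linear_combination heq2 - heq1
    · linear_combination -heq1
  obtain ⟨α, β, h⟩ := exists_dotProduct_self_eq_of_mem_hexLattice hA hdo hS hp hmem
  simp only [dotProduct_cons, head_cons, tail_cons, dotProduct_of_isEmpty, add_zero] at h
  exact ⟨α, β, by linear_combination h⟩

/-- The squared side length of any equilateral triangle in the
plane `aα + bβ + cγ = 0` with a vertex at the origin has the form
`2d²(α² − αβ + β²)` for some integers `α, β`. -/
theorem side_length_form
    (a b c d : ℤ)
    (ha : 0 < a) (hb : 0 < b) (hc : 0 < c) (hd : 0 < d)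
    (hao : Odd a) (hbo : Odd b) (hco : Odd c) (hdo : Odd d)
    (heq : a ^ 2 + b ^ 2 + c ^ 2 = 3 * d ^ 2)
    (hgcd : Int.gcd a (Int.gcd b c) = 1)
    (u₀ v₀ w₀ x₀ y₀ z₀ : ℤ)
    (hP : ((u₀, v₀, w₀) : ℤ × ℤ × ℤ) ≠ (0, 0, 0))
    (hQ : ((x₀, y₀, z₀) : ℤ × ℤ × ℤ) ≠ (0, 0, 0))
    (hPQ : ((u₀, v₀, w₀) : ℤ × ℤ × ℤ) ≠ (x₀, y₀, z₀))
    (hplaneP : a * u₀ + b * v₀ + c * w₀ = 0)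
    (hplaneQ : a * x₀ + b * y₀ + c * z₀ = 0)
    (heq1 : u₀ ^ 2 + v₀ ^ 2 + w₀ ^ 2 = x₀ ^ 2 + y₀ ^ 2 + z₀ ^ 2)
    (heq2 : u₀ ^ 2 + v₀ ^ 2 + w₀ ^ 2 =
      (u₀ - x₀) ^ 2 + (v₀ - y₀) ^ 2 + (w₀ - z₀) ^ 2) :
    ∃ α β : ℤ, u₀ ^ 2 + v₀ ^ 2 + w₀ ^ 2 = 2 * d ^ 2 * (α ^ 2 - α * β + β ^ 2) :=
  side_length_form_general a b c d hao hbo hco hdo heq hgcd u₀ v₀ w₀ x₀ y₀ z₀ hplaneP hplaneQ heq1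
    heq2
end

section
/- Let a, b, c, d be odd positive integers with a² + b² + c² = 3d² and gcd(a,b,c) = 1, set q = a² + b² and ζ = gcd(d, c). Then there exist integers r, s with s² + 3r² = 2q, ζ ∣ r, ζ ∣ s, and such that all twelve quantities m_x = −[db(3r+s) + ac(r−s)]/(2q), n_x = −(rac + dbs)/q, m_y = [da(3r+s) − bc(r−s)]/(2q), n_y = (das − bcr)/q, m_z = (r−s)/2, n_z = r, m_u = −(rac + dbs)/q, n_u = −[db(s−3r) + ac(r+s)]/(2q), m_v = (das − rbc)/q, n_v = [da(s−3r) − bc(r+s)]/(2q), m_w = r, n_w = (r+s)/2 are integers. -/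
/-!
Write `a = g a'`, `b = g b'`, `d = ζ d'`, `c = ζ c'` with `g = gcd(a, b)`; since
`gcd(g, ζ) = 1` the equation gives `a'² + b'² = ζ² Q` and `3d'² - c'² = g² Q`, and oddness
forces `Q ≡ 2 (mod 4)`. Modulo `Q` we have `a'² ≡ -b'²` and `c'² ≡ 3d'²`, with `b'd'` invertible,
so `t = -a'c'(b'd')⁻¹` is a square root of `-3`, and every divisibility required of the
coefficients follows from `s ≡ t r (mod Q)` (those by `2Q` also need `r ≡ s (mod 2)`).
Such `r, s` with `s² + 3r² = 2Q` exist by Gauss reduction: the lattice `{x ≡ t y (mod Q)}` has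
determinant `Q`, so `x² + 3y²` takes on it a nonzero value `≤ 2Q`; this value is a multiple of
`Q`, and it is not `Q` because `x² + 3y²` is never `2` modulo `4`. Finally `r, s` are multiplied
by `gζ`.
-/

theorem Int.exists_two_mul_abs_sub_mul_le (x : ℤ) {n : ℤ} (hn : 0 < n) :
    ∃ k : ℤ, 2 * |x - k * n| ≤ n := by
  lift n to ℕ using hn.le
  obtain ⟨k, hk⟩ := Int.dvd_bmod_sub_self (x := x) (m := n)
  have hlo := Int.le_bmod (x := x) (by exact_mod_cast hn)
  have hhi := Int.bmod_lt (x := x) (by exact_mod_cast hn)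
  refine ⟨-k, ?_⟩
  rw [show x - -k * n = x.bmod n by linarith]
  rcases abs_cases (x.bmod n) with ⟨h, -⟩ | ⟨h, -⟩ <;> omega

namespace Zsqrtd

variable {d : ℤ}

-- For `u v : ℤ√d`, `(u * star v).im` is the determinant of `u` and `v` as vectors in `ℤ²`.

theorem norm_mul_norm_eq (u v : ℤ√d) :
    u.norm * v.norm = (u * star v).re ^ 2 - d * (u * star v).im ^ 2 := by
  rw [← norm_conj v, ← norm_mul, norm_def]; ring

theorem im_mul_star_swap (u v : ℤ√d) : (v * star u).im = -(u * star v).im := by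
  simp only [im_mul, re_star, im_star]; ring

theorem mul_star_sub_intCast_mul (u v : ℤ√d) (k : ℤ) :
    u * star (v - k * u) = u * star v - (k * u.norm : ℤ) := by
  rw [Int.cast_mul, norm_eq_mul_conj]; simp only [star_sub, star_mul, star_intCast]; ring

theorem three_mul_norm_sq_le_of_forall_norm_le {u v : ℤ√d} (hd : d ≤ 0)
    (hle : u.norm ≤ v.norm) (hmin : ∀ k : ℤ, v.norm ≤ (v - k * u).norm) :
    3 * u.norm ^ 2 ≤ -4 * d * (u * star v).im ^ 2 := by
  have hu := norm_nonneg hd u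
  rcases hu.eq_or_lt with hu0 | hupos
  · rw [← hu0]; nlinarith [sq_nonneg (u * star v).im]
  obtain ⟨k, hk⟩ := Int.exists_two_mul_abs_sub_mul_le (u * star v).re hupos
  have hred := norm_mul_norm_eq u (v - k * u)
  rw [mul_star_sub_intCast_mul, re_sub, im_sub, re_intCast, im_intCast, sub_zero] at hred
  have huv := norm_mul_norm_eq u v
  have hmin_k := mul_le_mul_of_nonneg_left (hmin k) hu
  have hround := pow_le_pow_left₀ (by positivity) hk 2
  rw [mul_pow, sq_abs] at hround
  linarith [mul_le_mul_of_nonneg_left hle hu]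

theorem exists_mem_three_mul_norm_sq_le (hd : d < 0) (L : AddSubgroup (ℤ√d)) {u v : ℤ√d}
    (hu : u ∈ L) (hv : v ∈ L) (huv : (u * star v).im ≠ 0) :
    ∃ w ∈ L, 0 < w.norm ∧ 3 * w.norm ^ 2 ≤ -4 * d * (u * star v).im ^ 2 := by
  set C := (u * star v).im
  -- a pair of lattice vectors with determinant `± C` and least `N u + N v` is Gauss-reduced
  obtain ⟨m, ⟨u, v, hu, hv, hC, rfl⟩, hmin⟩ := Int.exists_least_of_bdd
    (P := fun m ↦ ∃ u v, u ∈ L ∧ v ∈ L ∧ (u * star v).im ^ 2 = C ^ 2 ∧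
      u.norm + v.norm = m)
    ⟨0, by
      rintro _ ⟨u, v, -, -, -, rfl⟩; linarith [norm_nonneg hd.le u, norm_nonneg hd.le v]⟩
    ⟨_, u, v, hu, hv, rfl, rfl⟩
  wlog hle : u.norm ≤ v.norm generalizing u v
  · refine this v u hv hu (by rw [im_mul_star_swap, neg_sq, hC]) (fun m hm ↦ ?_)
      (le_of_not_ge hle)
    rw [add_comm]; exact hmin m hm
  have hred (k : ℤ) : v.norm ≤ (v - k * u).norm := by
    have := hmin _ ⟨u, v - k * u, hu, L.sub_mem hv (by simpa using L.zsmul_mem hu k), by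
      rw [mul_star_sub_intCast_mul, im_sub, im_intCast, sub_zero, hC], rfl⟩
    linarith
  refine ⟨u, hu, ?_, ?_⟩
  · have hC2 : 0 < C ^ 2 := by positivity
    refine pos_of_mul_pos_left ?_ (norm_nonneg hd.le v)
    rw [norm_mul_norm_eq, hC]
    nlinarith [sq_nonneg (u * star v).re]
  · rw [← hC]; exact three_mul_norm_sq_le_of_forall_norm_le hd.le hle hred

end Zsqrtd

theorem Int.sq_add_three_mul_sq_emod_four_ne_two (x y : ℤ) : (x ^ 2 + 3 * y ^ 2) % 4 ≠ 2 := by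
  have hsq (z : ℤ) : z ^ 2 % 4 = 0 ∨ z ^ 2 % 4 = 1 := by
    rcases Int.even_or_odd z with ⟨a, rfl⟩ | hz
    · left; ring_nf; omega
    · exact .inr (Int.sq_mod_four_eq_one_of_odd hz)
  rcases hsq x with hx | hx <;> rcases hsq y with hy | hy <;> omega

theorem Int.exists_sq_add_three_mul_sq_eq_two_mul {n t : ℤ} (hn : 0 < n) (hn4 : n % 4 = 2)
    (ht : n ∣ t ^ 2 + 3) : ∃ x y : ℤ, x ^ 2 + 3 * y ^ 2 = 2 * n ∧ n ∣ x - t * y := by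
  let u : ℤ√(-3) := ⟨t, 1⟩
  let v : ℤ√(-3) := ⟨n, 0⟩
  have huv : (u * star v).im = n := by simp [u, v]
  obtain ⟨w, hw, hpos, hle⟩ := Zsqrtd.exists_mem_three_mul_norm_sq_le (u := u) (v := v)
    (by norm_num) (AddSubgroup.closure {u, v}) (AddSubgroup.subset_closure (by simp))
    (AddSubgroup.subset_closure (by simp)) (huv ▸ hn.ne')
  rw [huv] at hle
  have hwL : n ∣ w.re - t * w.im := by
    obtain ⟨j, k, rfl⟩ := AddSubgroup.mem_closure_pair.mp hw
    exact ⟨k, by simp [u, v]; ring⟩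
  have hnorm : w.norm = w.re ^ 2 + 3 * w.im ^ 2 := by rw [Zsqrtd.norm_def]; ring
  obtain ⟨j, hj⟩ : n ∣ w.norm := by
    rw [hnorm, show w.re ^ 2 + 3 * w.im ^ 2
      = (w.re - t * w.im) * (w.re + t * w.im) + w.im ^ 2 * (t ^ 2 + 3) by ring]
    exact dvd_add (hwL.mul_right _) (ht.mul_left _)
  rw [hj] at hpos hle
  have hj0 : 0 < j := pos_of_mul_pos_right hpos hn.le
  have hj2 : j ≤ 2 := by
    have : n ^ 2 * j ^ 2 ≤ n ^ 2 * 2 ^ 2 := by linarith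
    exact (abs_le_of_sq_le_sq' (le_of_mul_le_mul_left this (by positivity)) (by norm_num)).2
  interval_cases j
  · refine absurd ?_ (Int.sq_add_three_mul_sq_emod_four_ne_two w.re w.im)
    rw [← hnorm, hj, mul_one, hn4]
  · exact ⟨w.re, w.im, by rw [← hnorm, hj, mul_comm], hwL⟩

theorem Int.even_add_of_sq_add_three_mul_sq_eq_two_mul {r s n : ℤ}
    (h : s ^ 2 + 3 * r ^ 2 = 2 * n) : Even (r + s) :=
  (Int.even_pow' two_ne_zero).mp ⟨n - r ^ 2 + r * s, by linear_combination h⟩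

theorem Int.two_mul_dvd_of_dvd_of_four_dvd {Q X : ℤ} (hQ : Q % 4 = 2) (hQX : Q ∣ X)
    (h4 : 4 ∣ X) : 2 * Q ∣ X := by
  obtain ⟨m, rfl⟩ : ∃ m, Q = 2 * m := ⟨Q / 2, by omega⟩
  have hm : IsCoprime (2 ^ 2) m :=
    (Int.isCoprime_two_left.mpr (Int.odd_iff.mpr (by omega))).pow_left
  rw [← mul_assoc]
  exact hm.mul_dvd h4 (dvd_of_mul_left_dvd hQX)

theorem IsCoprime.of_dvd_sq_add_mul {R : Type*} [CommRing R] {a b x q : R} (h : IsCoprime a b)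
    (hq : q ∣ a ^ 2 + b * x) : IsCoprime b q :=
  (h.symm.pow_right.add_mul_left_right x).of_isCoprime_of_dvd_right hq

/-- The numerators of the coefficients of (paramtwo) are divisible by their denominators
(`m_u`, `m_v` repeat `n_x`, `n_y`, and `n_z = m_w = r`). -/
def ParamTwoIntegral (a b c d q r s : ℤ) : Prop :=
  (2 * q) ∣ (d * b * (3 * r + s) + a * c * (r - s)) ∧
  q ∣ (r * a * c + d * b * s) ∧
  (2 * q) ∣ (d * a * (3 * r + s) - b * c * (r - s)) ∧
  q ∣ (d * a * s - b * c * r) ∧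
  (2 : ℤ) ∣ (r - s) ∧
  (2 * q) ∣ (d * b * (s - 3 * r) + a * c * (r + s)) ∧
  (2 * q) ∣ (d * a * (s - 3 * r) - b * c * (r + s)) ∧
  (2 : ℤ) ∣ (r + s)

theorem ParamTwoIntegral.mul {a b c d q r s : ℤ} (h : ParamTwoIntegral a b c d q r s)
    (g z : ℤ) :
    ParamTwoIntegral (a * g) (b * g) (c * z) (d * z) (g ^ 2 * z ^ 2 * q) (g * z * r)
      (g * z * s) := by
  have scale {m X m' X' : ℤ} (hX : m ∣ X) (hm' : m' = g ^ 2 * z ^ 2 * m)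
      (hX' : X' = g ^ 2 * z ^ 2 * X) : m' ∣ X' :=
    hm' ▸ hX' ▸ mul_dvd_mul_left _ hX
  obtain ⟨h₁, h₂, h₃, h₄, h₅, h₆, h₇, h₈⟩ := h
  exact ⟨scale h₁ (by ring) (by ring), scale h₂ (by ring) (by ring),
    scale h₃ (by ring) (by ring), scale h₄ (by ring) (by ring), mul_sub (g * z) r s ▸ h₅.mul_left _,
    scale h₆ (by ring) (by ring), scale h₇ (by ring) (by ring),
    mul_add (g * z) r s ▸ h₈.mul_left _⟩

theorem four_dvd_paramTwo_numerators {a b c d r s : ℤ} (ha : Odd a) (hb : Odd b) (hc : Odd c)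
    (hd : Odd d) (hrs : Even (r + s)) :
    4 ∣ d * b * (3 * r + s) + a * c * (r - s) ∧
      4 ∣ d * a * (3 * r + s) - b * c * (r - s) ∧
      4 ∣ d * b * (s - 3 * r) + a * c * (r + s) ∧
      4 ∣ d * a * (s - 3 * r) - b * c * (r + s) := by
  have key (m x y : ℤ) (hx : Even x) (hy : Even y) : (4 : ℤ) ∣ 4 * m + x * y :=
    dvd_add (dvd_mul_right 4 m) (mul_dvd_mul (even_iff_two_dvd.mp hx) (even_iff_two_dvd.mp hy))
  have hrs' : Even (r - s) := Int.even_sub.mpr (Int.even_add.mp hrs)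
  refine ⟨?_, ?_, ?_, ?_⟩
  · rw [show d * b * (3 * r + s) + a * c * (r - s)
      = 4 * (d * b * r) + (a * c - d * b) * (r - s) by ring]
    exact key _ _ _ ((ha.mul hc).sub_odd (hd.mul hb)) hrs'
  · rw [show d * a * (3 * r + s) - b * c * (r - s)
      = 4 * (d * a * r) + (-(b * c) - d * a) * (r - s) by ring]
    exact key _ _ _ ((hb.mul hc).neg.sub_odd (hd.mul ha)) hrs'
  · rw [show d * b * (s - 3 * r) + a * c * (r + s)
      = 4 * -(d * b * r) + (d * b + a * c) * (r + s) by ring]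
    exact key _ _ _ ((hd.mul hb).add_odd (ha.mul hc)) hrs
  · rw [show d * a * (s - 3 * r) - b * c * (r + s)
      = 4 * -(d * a * r) + (d * a - b * c) * (r + s) by ring]
    exact key _ _ _ ((hd.mul ha).sub_odd (hb.mul hc)) hrs

theorem exists_paramTwoIntegral_of_coprime {a b c d Q : ℤ} (ha : Odd a) (hb : Odd b)
    (hc : Odd c) (hd : Odd d) (hQ : 0 < Q) (hQ4 : Q % 4 = 2) (hab : IsCoprime a b)
    (hcd : IsCoprime c d) (hQab : Q ∣ a ^ 2 + b ^ 2) (hQcd : Q ∣ 3 * d ^ 2 - c ^ 2) :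
    ∃ r s, s ^ 2 + 3 * r ^ 2 = 2 * Q ∧ ParamTwoIntegral a b c d Q r s := by
  have hbQ : IsCoprime b Q := hab.of_dvd_sq_add_mul (x := b) (by rwa [← sq])
  have hdQ : IsCoprime d Q := hcd.of_dvd_sq_add_mul (x := -(3 * d)) (by
    rwa [show c ^ 2 + d * -(3 * d) = -(3 * d ^ 2 - c ^ 2) by ring, dvd_neg])
  obtain ⟨u, v, huv⟩ := hbQ.mul_left hdQ
  lift Q to ℕ using hQ.le
  have hcast (X : ℤ) : (X : ZMod Q) = 0 ↔ (Q : ℤ) ∣ X :=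
    ZMod.intCast_zmod_eq_zero_iff_dvd X Q
  have hab' : (a : ZMod Q) ^ 2 + b ^ 2 = 0 := by exact_mod_cast (hcast _).2 hQab
  have hcd' : 3 * (d : ZMod Q) ^ 2 - c ^ 2 = 0 := by exact_mod_cast (hcast _).2 hQcd
  have hu : (u : ZMod Q) * (b * d) = 1 := by
    have := congrArg (Int.cast : ℤ → ZMod Q) huv
    push_cast at this
    rwa [ZMod.natCast_self, mul_zero, add_zero] at this
  -- every congruence mod `Q` below, `(-a c u)² = -3` included, is a polynomial consequence
  -- of `a² = -b²`, `3d² = c²`, `u b d = 1` and `s = -a c u r` in `ZMod Q`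
  obtain ⟨s, r, hrs, hsr⟩ := Int.exists_sq_add_three_mul_sq_eq_two_mul hQ hQ4
    (t := -(a * c * u)) ((hcast _).1 (by push_cast; grind))
  have hs : (s : ZMod Q) = -(a * c * u) * r := by
    have := (hcast _).2 hsr; push_cast at this; grind
  have heven := Int.even_add_of_sq_add_three_mul_sq_eq_two_mul hrs
  obtain ⟨h₁, h₃, h₆, h₇⟩ := four_dvd_paramTwo_numerators ha hb hc hd heven
  exact ⟨r, s, hrs,
    Int.two_mul_dvd_of_dvd_of_four_dvd hQ4 ((hcast _).1 (by push_cast; grind)) h₁,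
    (hcast _).1 (by push_cast; grind),
    Int.two_mul_dvd_of_dvd_of_four_dvd hQ4 ((hcast _).1 (by push_cast; grind)) h₃,
    (hcast _).1 (by push_cast; grind),
    even_iff_two_dvd.mp (Int.even_sub.mpr (Int.even_add.mp heven)),
    Int.two_mul_dvd_of_dvd_of_four_dvd hQ4 ((hcast _).1 (by push_cast; grind)) h₆,
    Int.two_mul_dvd_of_dvd_of_four_dvd hQ4 ((hcast _).1 (by push_cast; grind)) h₇,
    even_iff_two_dvd.mp heven⟩

theorem exists_paramTwoIntegral_of_mul_eq {a b c d g z : ℤ} (ha : Odd a) (hb : Odd b)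
    (hc : Odd c) (hd : Odd d) (hz : Odd z) (hab : IsCoprime a b) (hcd : IsCoprime c d)
    (hgz : IsCoprime g z) (h : g ^ 2 * (a ^ 2 + b ^ 2) = z ^ 2 * (3 * d ^ 2 - c ^ 2)) :
    ∃ Q r s, a ^ 2 + b ^ 2 = z ^ 2 * Q ∧ s ^ 2 + 3 * r ^ 2 = 2 * Q ∧
      ParamTwoIntegral a b c d Q r s := by
  obtain ⟨Q, hQ⟩ : z ^ 2 ∣ a ^ 2 + b ^ 2 := hgz.symm.pow.dvd_of_dvd_mul_left ⟨_, h⟩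
  have hz0 : z ^ 2 ≠ 0 := pow_ne_zero 2 (by rintro rfl; simp at hz)
  have hQ' : 3 * d ^ 2 - c ^ 2 = g ^ 2 * Q :=
    mul_left_cancel₀ hz0 (by linear_combination -h + g ^ 2 * hQ)
  have hQ4 : Q % 4 = 2 := by
    have ha4 := Int.sq_mod_four_eq_one_of_odd ha
    have hb4 := Int.sq_mod_four_eq_one_of_odd hb
    obtain ⟨k, hk⟩ : ∃ k, z ^ 2 = 4 * k + 1 :=
      ⟨z ^ 2 / 4, by have := Int.sq_mod_four_eq_one_of_odd hz; omega⟩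
    have : a ^ 2 + b ^ 2 = 4 * (k * Q) + Q := by rw [hQ, hk]; ring
    omega
  have hQpos : 0 < Q := by
    have := nonneg_of_mul_nonneg_right (hQ ▸ by positivity : 0 ≤ z ^ 2 * Q)
      (hz0.symm.lt_of_le (sq_nonneg z))
    omega
  obtain ⟨r, s, hrs, hP⟩ := exists_paramTwoIntegral_of_coprime ha hb hc hd hQpos hQ4 hab hcd
    (Dvd.intro_left _ hQ.symm) (Dvd.intro_left _ hQ'.symm)
  exact ⟨Q, r, s, hQ, hrs, hP⟩

theorem Int.isCoprime_gcd_gcd_of_gcd_gcd_eq_one {a b c d : ℤ}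
    (h : Int.gcd a (Int.gcd b c) = 1) :
    IsCoprime (Int.gcd a b : ℤ) (Int.gcd d c) :=
  (Int.isCoprime_iff_gcd_eq_one.mpr (by rwa [Int.gcd_assoc])).of_isCoprime_of_dvd_right
    (Int.gcd_dvd_right _ _)

theorem exists_r_s_divisible_by_zeta_general
    (a b c d : ℤ)
    (hao : Odd a) (hbo : Odd b) (hco : Odd c) (hdo : Odd d)
    (heq : a ^ 2 + b ^ 2 + c ^ 2 = 3 * d ^ 2)
    (hgcd : Int.gcd a (Int.gcd b c) = 1)
    (q : ℤ) (hq : q = a ^ 2 + b ^ 2) :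
    ∃ r s : ℤ,
      s ^ 2 + 3 * r ^ 2 = 2 * q ∧
      ((Int.gcd d c : ℤ)) ∣ r ∧
      ((Int.gcd d c : ℤ)) ∣ s ∧
      (2 * q) ∣ (d * b * (3 * r + s) + a * c * (r - s)) ∧
      q ∣ (r * a * c + d * b * s) ∧
      (2 * q) ∣ (d * a * (3 * r + s) - b * c * (r - s)) ∧
      q ∣ (d * a * s - b * c * r) ∧
      (2 : ℤ) ∣ (r - s) ∧
      (2 * q) ∣ (d * b * (s - 3 * r) + a * c * (r + s)) ∧
      (2 * q) ∣ (d * a * (s - 3 * r) - b * c * (r + s)) ∧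
      (2 : ℤ) ∣ (r + s) := by
  subst hq
  obtain ⟨a', b', hab, ha', hb'⟩ :=
    Int.exists_gcd_one (m := a) (Int.gcd_pos_of_ne_zero_left b (by rintro rfl; simp at hao))
  obtain ⟨d', c', hdc, hd', hc'⟩ :=
    Int.exists_gcd_one (m := d) (Int.gcd_pos_of_ne_zero_left c (by rintro rfl; simp at hdo))
  have hgz := Int.isCoprime_gcd_gcd_of_gcd_gcd_eq_one (d := d) hgcd
  generalize (Int.gcd a b : ℤ) = g at ha' hb' hgz
  generalize (Int.gcd d c : ℤ) = z at hd' hc' hgz ⊢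
  subst ha' hb' hd' hc'
  obtain ⟨ha'o, -⟩ := Int.odd_mul.mp hao
  obtain ⟨hb'o, -⟩ := Int.odd_mul.mp hbo
  obtain ⟨hc'o, hzo⟩ := Int.odd_mul.mp hco
  obtain ⟨hd'o, -⟩ := Int.odd_mul.mp hdo
  obtain ⟨Q, r, s, hQ, hrs, hP⟩ := exists_paramTwoIntegral_of_mul_eq ha'o hb'o hc'o hd'o hzo
    (Int.isCoprime_iff_gcd_eq_one.mpr hab)
    (Int.isCoprime_iff_gcd_eq_one.mpr (by rwa [Int.gcd_comm])) hgz (by linear_combination heq)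
  rw [show (a' * g) ^ 2 + (b' * g) ^ 2 = g ^ 2 * z ^ 2 * Q by linear_combination g ^ 2 * hQ]
  exact ⟨g * z * r, g * z * s, by linear_combination g ^ 2 * z ^ 2 * hrs,
    (dvd_mul_left z g).mul_right r, (dvd_mul_left z g).mul_right s, hP.mul g z⟩

/-- There exist integers `r, s` with `s² + 3r² = 2q`, both
divisible by `ζ = gcd(d, c)`, making all twelve coefficient quantities of the
parametrization (paramtwo) integers (expressed by the divisibility
conditions on the numerators). -/
theorem exists_r_s_divisible_by_zeta
    (a b c d : ℤ)
    (ha : 0 < a) (hb : 0 < b) (hc : 0 < c) (hd : 0 < d)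
    (hao : Odd a) (hbo : Odd b) (hco : Odd c) (hdo : Odd d)
    (heq : a ^ 2 + b ^ 2 + c ^ 2 = 3 * d ^ 2)
    (hgcd : Int.gcd a (Int.gcd b c) = 1)
    (q : ℤ) (hq : q = a ^ 2 + b ^ 2) :
    ∃ r s : ℤ,
      s ^ 2 + 3 * r ^ 2 = 2 * q ∧
      ((Int.gcd d c : ℤ)) ∣ r ∧
      ((Int.gcd d c : ℤ)) ∣ s ∧
      (2 * q) ∣ (d * b * (3 * r + s) + a * c * (r - s)) ∧
      q ∣ (r * a * c + d * b * s) ∧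
      (2 * q) ∣ (d * a * (3 * r + s) - b * c * (r - s)) ∧
      q ∣ (d * a * s - b * c * r) ∧
      (2 : ℤ) ∣ (r - s) ∧
      (2 * q) ∣ (d * b * (s - 3 * r) + a * c * (r + s)) ∧
      (2 * q) ∣ (d * a * (s - 3 * r) - b * c * (r + s)) ∧
      (2 : ℤ) ∣ (r + s) :=
  exists_r_s_divisible_by_zeta_general a b c d hao hbo hco hdo heq hgcd q hq
end

section
/- Let a, b, c, d be odd positive integers with a² + b² + c² = 3d² and gcd(a,b,c) = 1, set q = a² + b² and ζ = gcd(d, c). If r, s are integers with s² + 3r² = 2q such that all twelve quantities m_x = −[db(3r+s) + ac(r−s)]/(2q), n_x = −(rac + dbs)/q, m_y = [da(3r+s) − bc(r−s)]/(2q), n_y = (das − bcr)/q, m_z = (r−s)/2, n_z = r, m_u = −(rac + dbs)/q, n_u = −[db(s−3r) + ac(r+s)]/(2q), m_v = (das − rbc)/q, n_v = [da(s−3r) − bc(r+s)]/(2q), m_w = r, n_w = (r+s)/2 are integers, then ζ divides r and ζ divides s. -/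
/-!
Write `g = gcd(d, c)`, `c = g c'`, `d = g d'`, so that `q = 3d² - c² = g k` with
`k = g (3d'² - c'²)`. The two coefficient conditions `q ∣ das - bcr` and `q ∣ 3dbr - acs`
lose one factor `g` when `c, d` are divided by `g`, and the combinations
`c'·(das - bcr) + d'·(3dbr - acs) = k b r` and `3d'·(das - bcr) + c'·(3dbr - acs) = k a s`
then give `g k ∣ k b r` and `g k ∣ k a s`, i.e. `g ∣ b r` and `g ∣ a s`.
Finally `g` is prime to `a` and to `b`: a common factor of `g` and `b` divides `c` and `a²`,
hence `a`, and `gcd(a, b, c) = 1`.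
-/

theorem dvd_mul_of_three_sq_sub_sq_dvd {R : Type*} [CommRing R] [IsDomain R]
    {a b c d g r s : R} (hgc : g ∣ c) (hgd : g ∣ d) (hq : 3 * d ^ 2 - c ^ 2 ≠ 0)
    (hX : 3 * d ^ 2 - c ^ 2 ∣ d * a * s - b * c * r)
    (hY : 3 * d ^ 2 - c ^ 2 ∣ 3 * d * b * r - a * c * s) :
    g ∣ b * r ∧ g ∣ a * s := by
  obtain ⟨c', rfl⟩ := hgc
  obtain ⟨d', rfl⟩ := hgd
  set k := g * (3 * d' ^ 2 - c' ^ 2)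
  have hqk : 3 * (g * d') ^ 2 - (g * c') ^ 2 = g * k := by ring
  rw [hqk] at hq hX hY
  have hk : k ≠ 0 := right_ne_zero_of_mul hq
  constructor
  · have h : g * k ∣ b * r * k := by
      have e : b * r * k = c' * (g * d' * a * s - b * (g * c') * r)
          + d' * (3 * (g * d') * b * r - a * (g * c') * s) := by ring
      exact e ▸ dvd_add (hX.mul_left _) (hY.mul_left _)
    exact (mul_dvd_mul_iff_right hk).mp h
  · have h : g * k ∣ a * s * k := by
      have e : a * s * k = 3 * d' * (g * d' * a * s - b * (g * c') * r)
          + c' * (3 * (g * d') * b * r - a * (g * c') * s) := by ring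
      exact e ▸ dvd_add (hX.mul_left _) (hY.mul_left _)
    exact (mul_dvd_mul_iff_right hk).mp h

theorem isRelPrime_of_dvd_sq_add_sq {α : Type*} [CommRing α] [DecompositionMonoid α]
    {a b c g : α} (habc : ∀ e, e ∣ a → e ∣ b → e ∣ c → IsUnit e)
    (hgc : g ∣ c) (hg : g ∣ a ^ 2 + b ^ 2) : IsRelPrime g b := by
  intro e heg heb
  have hec : e ∣ c := heg.trans hgc
  have hea : e ∣ a * a := by
    have h := dvd_sub (heg.trans hg) (dvd_pow heb two_ne_zero)
    rwa [add_sub_cancel_right, sq] at h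
  have hrel : IsRelPrime e a := fun f hfe hfa => habc f hfa (hfe.trans heb) (hfe.trans hec)
  exact habc e (hrel.dvd_of_dvd_mul_left hea) heb hec

theorem zeta_dvd_r_s_general
    (a b c d : ℤ)
    (ha : 0 < a)
    (heq : a ^ 2 + b ^ 2 + c ^ 2 = 3 * d ^ 2)
    (hgcd : Int.gcd a (Int.gcd b c) = 1)
    (q : ℤ) (hq : q = a ^ 2 + b ^ 2)
    (r s : ℤ)
    (h1 : (2 * q) ∣ (d * b * (3 * r + s) + a * c * (r - s)))
    (h4 : q ∣ (d * a * s - b * c * r))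
    (h6 : (2 * q) ∣ (d * b * (s - 3 * r) + a * c * (r + s))) :
    ((Int.gcd d c : ℤ)) ∣ r ∧ ((Int.gcd d c : ℤ)) ∣ s := by
  have hq3 : q = 3 * d ^ 2 - c ^ 2 := by linarith
  have hq0 : q ≠ 0 := by rw [hq]; positivity
  have hY : q ∣ 3 * d * b * r - a * c * s := by
    have h := dvd_sub h1 h6
    rw [show d * b * (3 * r + s) + a * c * (r - s) - (d * b * (s - 3 * r) + a * c * (r + s))
      = 2 * (3 * d * b * r - a * c * s) by ring] at h
    exact (mul_dvd_mul_iff_left two_ne_zero).mp h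
  set g : ℤ := (Int.gcd d c : ℤ)
  have hgd : g ∣ d := Int.gcd_dvd_left d c
  have hgc : g ∣ c := Int.gcd_dvd_right d c
  rw [hq3] at hq0 h4 hY
  obtain ⟨hbr, has⟩ := dvd_mul_of_three_sq_sub_sq_dvd hgc hgd hq0 h4 hY
  have habc : ∀ e : ℤ, e ∣ a → e ∣ b → e ∣ c → IsUnit e := fun e hea heb hec =>
    isUnit_of_dvd_one <| by
      simpa [hgcd] using Int.dvd_coe_gcd hea (Int.dvd_coe_gcd heb hec)
  have hgq : g ∣ a ^ 2 + b ^ 2 := by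
    rw [← hq, hq3]
    exact dvd_sub ((dvd_pow hgd two_ne_zero).mul_left 3) (dvd_pow hgc two_ne_zero)
  have hgb := isRelPrime_of_dvd_sq_add_sq habc hgc hgq
  have hga := isRelPrime_of_dvd_sq_add_sq (fun e heb hea hec => habc e hea heb hec) hgc
    (add_comm (a ^ 2) _ ▸ hgq)
  exact ⟨hgb.dvd_of_dvd_mul_left hbr, hga.dvd_of_dvd_mul_left has⟩

/-- Remark: if `r, s` satisfy `s² + 3r² = 2q` and make all
twelve coefficient quantities of the parametrization (paramtwo) integers,
then `ζ = gcd(d, c)` divides both `r` and `s`. -/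
theorem zeta_dvd_r_s
    (a b c d : ℤ)
    (ha : 0 < a) (hb : 0 < b) (hc : 0 < c) (hd : 0 < d)
    (hao : Odd a) (hbo : Odd b) (hco : Odd c) (hdo : Odd d)
    (heq : a ^ 2 + b ^ 2 + c ^ 2 = 3 * d ^ 2)
    (hgcd : Int.gcd a (Int.gcd b c) = 1)
    (q : ℤ) (hq : q = a ^ 2 + b ^ 2)
    (r s : ℤ)
    (hrs : s ^ 2 + 3 * r ^ 2 = 2 * q)
    (h1 : (2 * q) ∣ (d * b * (3 * r + s) + a * c * (r - s)))
    (h2 : q ∣ (r * a * c + d * b * s))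
    (h3 : (2 * q) ∣ (d * a * (3 * r + s) - b * c * (r - s)))
    (h4 : q ∣ (d * a * s - b * c * r))
    (h5 : (2 : ℤ) ∣ (r - s))
    (h6 : (2 * q) ∣ (d * b * (s - 3 * r) + a * c * (r + s)))
    (h7 : (2 * q) ∣ (d * a * (s - 3 * r) - b * c * (r + s)))
    (h8 : (2 : ℤ) ∣ (r + s)) :
    ((Int.gcd d c : ℤ)) ∣ r ∧ ((Int.gcd d c : ℤ)) ∣ s :=
  zeta_dvd_r_s_general a b c d ha heq hgcd q hq r s h1 h4 h6
end

section
/- The integer 1105 is the least positive integer d such that there exist odd positive integers a, b, c with a² + b² + c² = 3d², gcd(a, b, c) = 1, and gcd(d, a) > 1, gcd(d, b) > 1, gcd(d, c) > 1. -/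
/-!
Any prime `p` dividing both `d` and `a` divides `b² + c² = 3d² - a²`. It cannot divide `b`
(otherwise it would divide `c` too, contradicting `gcd(a, b, c) = 1`), so `-1` is a square
mod `p`, and `p` is odd since `a` is; hence `p ≡ 1 (mod 4)`. The primes found in `gcd(d, a)`,
`gcd(d, b)`, `gcd(d, c)` are pairwise distinct for the same reason, so `d` is divisible by three
distinct primes `≡ 1 (mod 4)` and `d ≥ 5 · 13 · 17 = 1105`. Equality is attained by
`187² + 415² + 1859² = 3 · 1105²`.
-/

theorem Nat.Prime.mod_four_eq_one_of_dvd_sq_add_sq {p : ℕ} (hp : p.Prime) (hp2 : p ≠ 2)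
    {y z : ℤ} (hdvd : (p : ℤ) ∣ y ^ 2 + z ^ 2) (hy : ¬ (p : ℤ) ∣ y) : p % 4 = 1 := by
  have := Fact.mk hp
  have hsum : ((y : ZMod p)) ^ 2 + (z : ZMod p) ^ 2 = 0 := by
    exact_mod_cast (ZMod.intCast_zmod_eq_zero_iff_dvd _ p).mpr hdvd
  have hy0 : (y : ZMod p) ≠ 0 := by rwa [Ne, ZMod.intCast_zmod_eq_zero_iff_dvd]
  have h3 := ZMod.mod_four_ne_three_of_sq_eq_neg_sq hy0 (eq_neg_of_add_eq_zero_left hsum)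
  have h1 := (hp.mod_two_eq_one_iff_ne_two).mpr hp2
  omega

theorem Nat.Prime.eq_five_or_eq_thirteen_or_seventeen_le {p : ℕ} (hp : p.Prime)
    (h1 : p % 4 = 1) : p = 5 ∨ p = 13 ∨ 17 ≤ p := by
  rcases lt_or_ge p 17 with h | h
  · interval_cases p <;> first | omega | exact absurd hp (by decide)
  · exact Or.inr (Or.inr h)

theorem Nat.Prime.prod_three_le_of_mod_four_eq_one {p q r : ℕ}
    (hp : p.Prime) (hq : q.Prime) (hr : r.Prime)
    (hp4 : p % 4 = 1) (hq4 : q % 4 = 1) (hr4 : r % 4 = 1)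
    (hpq : p ≠ q) (hpr : p ≠ r) (hqr : q ≠ r) : 5 * 13 * 17 ≤ p * q * r := by
  obtain hp | hp | hp := hp.eq_five_or_eq_thirteen_or_seventeen_le hp4 <;>
  obtain hq | hq | hq := hq.eq_five_or_eq_thirteen_or_seventeen_le hq4 <;>
  obtain hr | hr | hr := hr.eq_five_or_eq_thirteen_or_seventeen_le hr4 <;>
  subst_vars <;>
  first
    | omega
    | nlinarith [Nat.mul_le_mul hq hr]
    | nlinarith [Nat.mul_le_mul hp hr]
    | nlinarith [Nat.mul_le_mul hp hq]

theorem Nat.Prime.le_of_three_dvd_of_mod_four_eq_one {n p q r : ℕ} (hn : n ≠ 0)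
    (hp : p.Prime) (hq : q.Prime) (hr : r.Prime)
    (hp4 : p % 4 = 1) (hq4 : q % 4 = 1) (hr4 : r % 4 = 1)
    (hpq : p ≠ q) (hpr : p ≠ r) (hqr : q ≠ r) (hpn : p ∣ n) (hqn : q ∣ n) (hrn : r ∣ n) :
    5 * 13 * 17 ≤ n := by
  have hpqr : p * q * r ∣ n := by
    refine Nat.Coprime.mul_dvd_of_dvd_of_dvd ?_ (Nat.Coprime.mul_dvd_of_dvd_of_dvd ?_ hpn hqn) hrn
    · exact ((Nat.coprime_primes hp hr).mpr hpr).mul_left ((Nat.coprime_primes hq hr).mpr hqr)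
    · exact (Nat.coprime_primes hp hq).mpr hpq
  exact (hp.prod_three_le_of_mod_four_eq_one hq hr hp4 hq4 hr4 hpq hpr hqr).trans
    (Nat.le_of_dvd (Nat.pos_of_ne_zero hn) hpqr)

section SumOfThreeSquares

variable {m d x y z : ℤ}

theorem Prime.dvd_of_sq_add_sq_add_sq_eq {p : ℤ} (hp : Prime p)
    (heq : x ^ 2 + y ^ 2 + z ^ 2 = m * d ^ 2)
    (hd : p ∣ d) (hx : p ∣ x) (hy : p ∣ y) : p ∣ z := by
  have hz : z ^ 2 = m * d ^ 2 - x ^ 2 - y ^ 2 := by linarith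
  refine hp.dvd_of_dvd_pow (n := 2) ?_
  rw [hz]
  exact (((dvd_pow hd two_ne_zero).mul_left m).sub (dvd_pow hx two_ne_zero)).sub
    (dvd_pow hy two_ne_zero)

theorem Nat.Prime.mod_four_eq_one_and_not_dvd_of_sq_add_sq_add_sq_eq {p : ℕ} (hp : p.Prime)
    (heq : x ^ 2 + y ^ 2 + z ^ 2 = m * d ^ 2)
    (hprim : ∀ t : ℤ, _root_.Prime t → t ∣ x → t ∣ y → ¬ t ∣ z) (hx : Odd x)
    (hpd : (p : ℤ) ∣ d) (hpx : (p : ℤ) ∣ x) :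
    p % 4 = 1 ∧ ¬ (p : ℤ) ∣ y ∧ ¬ (p : ℤ) ∣ z := by
  have hpZ : _root_.Prime (p : ℤ) := Nat.prime_iff_prime_int.mp hp
  have hpy : ¬ (p : ℤ) ∣ y := fun hpy =>
    hprim _ hpZ hpx hpy (hpZ.dvd_of_sq_add_sq_add_sq_eq heq hpd hpx hpy)
  have hpz : ¬ (p : ℤ) ∣ z := fun hpz =>
    hprim _ hpZ hpx (hpZ.dvd_of_sq_add_sq_add_sq_eq (m := m) (by linarith) hpd hpx hpz) hpz
  have hp2 : p ≠ 2 := by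
    rintro rfl
    exact Int.not_even_iff_odd.mpr hx (even_iff_two_dvd.mpr (by exact_mod_cast hpx))
  have hyz : (p : ℤ) ∣ y ^ 2 + z ^ 2 := by
    rw [show y ^ 2 + z ^ 2 = m * d ^ 2 - x ^ 2 by linarith]
    exact ((dvd_pow hpd two_ne_zero).mul_left m).sub (dvd_pow hpx two_ne_zero)
  exact ⟨hp.mod_four_eq_one_of_dvd_sq_add_sq hp2 hyz hpy, hpy, hpz⟩

end SumOfThreeSquares

theorem Int.exists_prime_dvd_of_one_lt_gcd {d x : ℤ} (h : 1 < Int.gcd d x) :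
    ∃ p : ℕ, p.Prime ∧ (p : ℤ) ∣ d ∧ (p : ℤ) ∣ x := by
  obtain ⟨p, hp, hpg⟩ := Nat.exists_prime_and_dvd h.ne'
  have hpg' : (p : ℤ) ∣ Int.gcd d x := Int.natCast_dvd_natCast.mpr hpg
  exact ⟨p, hp, hpg'.trans (Int.gcd_dvd_left _ _), hpg'.trans (Int.gcd_dvd_right _ _)⟩

theorem Int.not_dvd_of_gcd_gcd_eq_one {a b c : ℤ} (hg : Int.gcd a (Int.gcd b c) = 1)
    (t : ℤ) (ht : Prime t) (ha : t ∣ a) (hb : t ∣ b) : ¬ t ∣ c := fun hc =>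
  ht.not_isUnit (isUnit_of_dvd_one (by
    simpa [hg] using Int.dvd_coe_gcd ha (Int.dvd_coe_gcd hb hc)))

/-- `1105` is the least positive integer `d` admitting a
degenerate solution of `a² + b² + c² = 3d²`, i.e. odd positive `a, b, c` with
`gcd(a,b,c) = 1` and `min(gcd(d,a), gcd(d,b), gcd(d,c)) > 1`. -/
theorem least_degenerate_d :
    IsLeast
      {d : ℤ | 0 < d ∧
        ∃ a b c : ℤ, 0 < a ∧ 0 < b ∧ 0 < c ∧
          Odd a ∧ Odd b ∧ Odd c ∧
          a ^ 2 + b ^ 2 + c ^ 2 = 3 * d ^ 2 ∧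
          Int.gcd a (Int.gcd b c) = 1 ∧
          1 < Int.gcd d a ∧ 1 < Int.gcd d b ∧ 1 < Int.gcd d c}
      1105 := by
  refine ⟨⟨by norm_num, 187, 415, 1859, by norm_num, by norm_num, by norm_num,
    ⟨93, by norm_num⟩, ⟨207, by norm_num⟩, ⟨929, by norm_num⟩, by norm_num,
    by norm_num, by norm_num, by norm_num, by norm_num⟩, ?_⟩
  rintro d ⟨hd, a, b, c, -, -, -, hoa, hob, hoc, heq, hg, hda, hdb, hdc⟩
  have hprim := Int.not_dvd_of_gcd_gcd_eq_one hg
  obtain ⟨p, hp, hpd, hpa⟩ := Int.exists_prime_dvd_of_one_lt_gcd hda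
  obtain ⟨q, hq, hqd, hqb⟩ := Int.exists_prime_dvd_of_one_lt_gcd hdb
  obtain ⟨r, hr, hrd, hrc⟩ := Int.exists_prime_dvd_of_one_lt_gcd hdc
  obtain ⟨hp4, hpb, hpc⟩ :=
    hp.mod_four_eq_one_and_not_dvd_of_sq_add_sq_add_sq_eq heq hprim hoa hpd hpa
  obtain ⟨hq4, hqc, -⟩ := hq.mod_four_eq_one_and_not_dvd_of_sq_add_sq_add_sq_eq
    (m := 3) (by linarith) (fun t ht hb hc ha => hprim t ht ha hb hc) hob hqd hqb
  obtain ⟨hr4, -, -⟩ := hr.mod_four_eq_one_and_not_dvd_of_sq_add_sq_add_sq_eq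
    (m := 3) (by linarith) (fun t ht hc ha hb => hprim t ht ha hb hc) hoc hrd hrc
  have hpq : p ≠ q := by rintro rfl; exact hpb hqb
  have hpr : p ≠ r := by rintro rfl; exact hpc hrc
  have hqr : q ≠ r := by rintro rfl; exact hqc hrc
  lift d to ℕ using hd.le
  exact_mod_cast Nat.Prime.le_of_three_dvd_of_mod_four_eq_one (by exact_mod_cast hd.ne')
    hp hq hr hp4 hq4 hr4 hpq hpr hqr (Int.natCast_dvd_natCast.mp hpd)
    (Int.natCast_dvd_natCast.mp hqd) (Int.natCast_dvd_natCast.mp hrd)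
end
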